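/- arXiv:2511.11785 — 7 statements merged into one kernel-verified Lean document; each statement's English description precedes it below -/
import Mathlib

section
/- Let N be a finite set with |N| ≥ 2 and let T be a proper subset of N×N (i.e. T ≠ N×N). Then there exists a set S of enumerations of N such that T = {(u,v) ∈ N×N : π⁻¹(u) ≤ π⁻¹(v) for every π ∈ S} if and only if T is a poset on N. -/
/-- An *enumeration* of a finite set `N`: a bijection `π` from `{1,…,n}` (modeled as
`Fin (Fintype.card N)`) onto `N`. -/
abbrev Enum (N : Type*) [Fintype N] := Fin (Fintype.card N) ≃ N

/-- `P ⊆ N × N` is a *poset on `N`*: a reflexive, antisymmetric and transitive relation. -/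
def IsPosetOn {N : Type*} (P : Set (N × N)) : Prop :=
  (∀ u : N, (u, u) ∈ P) ∧
  (∀ u v : N, (u, v) ∈ P → (v, u) ∈ P → u = v) ∧
  (∀ u v w : N, (u, v) ∈ P → (v, w) ∈ P → (u, w) ∈ P)

/-- The diagonal `Δ = {(u,u) : u ∈ N}`. -/
def diag (N : Type*) : Set (N × N) := {p | p.1 = p.2}

/-- The set `L(T)` of *linear extensions* of a relation `T ⊆ N × N`:
enumerations `π` with `π⁻¹(u) ≤ π⁻¹(v)` for all `(u,v) ∈ T`. -/
def LinExt {N : Type*} [Fintype N] (T : Set (N × N)) : Set (Enum N) :=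
  {π | ∀ p ∈ T, π.symm p.1 ≤ π.symm p.2}

/-- `π` and `σ` differ by the adjacent transposition at positions `i, i+1`. -/
def AdjTranspAt {N : Type*} [Fintype N] (π σ : Enum N) (i : Fin (Fintype.card N))
    (h : (i : ℕ) + 1 < Fintype.card N) : Prop :=
  π i = σ ⟨(i : ℕ) + 1, h⟩ ∧ π ⟨(i : ℕ) + 1, h⟩ = σ i ∧
  ∀ k : Fin (Fintype.card N), k ≠ i → k ≠ ⟨(i : ℕ) + 1, h⟩ → π k = σ k

/-- `π` and `σ` differ by an adjacent transposition. -/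
def AdjTransp {N : Type*} [Fintype N] (π σ : Enum N) : Prop :=
  ∃ i h, AdjTranspAt π σ i h

/-- The *permutohedral graph* over `N`: nodes are the enumerations of `N`, and edges join
enumerations differing by an adjacent transposition. -/
def permGraph (N : Type*) [Fintype N] : SimpleGraph (Enum N) where
  Adj π σ := AdjTransp π σ
  symm := by
    constructor
    rintro π σ ⟨i, h, h1, h2, h3⟩
    exact ⟨i, h, h2.symm, h1.symm, fun k hk hk' => (h3 k hk hk').symm⟩
  loopless := by
    constructor
    rintro π ⟨i, h, h1, -, -⟩
    have hi : i = ⟨(i : ℕ) + 1, h⟩ := π.injective h1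
    have : (i : ℕ) = (i : ℕ) + 1 := congrArg Fin.val hi
    omega

/-- `π` and `σ` are joined by an edge of the permutohedral graph labeled by `{u,v}`,
i.e. they differ by the adjacent transposition at some `i` with `{π(i), π(i+1)} = {u,v}`. -/
def AdjLabeled {N : Type*} [Fintype N] (π σ : Enum N) (u v : N) : Prop :=
  ∃ i h, AdjTranspAt π σ i h ∧ ({π i, π ⟨(i : ℕ) + 1, h⟩} : Set N) = {u, v}

/-- `Inv[π,σ]`: the set of *inversions* between enumerations `π` and `σ`, i.e. two-element
sets `{u,v} ⊆ N` whose elements occur in opposite mutual order in `π` and `σ`. -/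
def InvBetween {N : Type*} [Fintype N] (π σ : Enum N) : Set (Set N) :=
  {L | ∃ u v : N, L = {u, v} ∧ π.symm u < π.symm v ∧ σ.symm v < σ.symm u}

/-- `Inv(S)`: the set of *inversions within* a set `S` of enumerations: two-element sets
`{u,v} ⊆ N` labeling some edge of the permutohedral graph with both endpoints in `S`. -/
def InvS {N : Type*} [Fintype N] (S : Set (Enum N)) : Set (Set N) :=
  {L | ∃ u v : N, u ≠ v ∧ L = {u, v} ∧ ∃ π ∈ S, ∃ σ ∈ S, AdjLabeled π σ u v}

/-- `Cov(S)`: the *covering relation* for a set `S` of enumerations: pairs `(u,v)` such that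
some edge labeled `{u,v}` joins `π ∈ S` with `σ ∉ S` and `u` strictly precedes `v` in `π`. -/
def CovS {N : Type*} [Fintype N] (S : Set (Enum N)) : Set (N × N) :=
  {p | ∃ π ∈ S, ∃ σ, σ ∉ S ∧ AdjLabeled π σ p.1 p.2 ∧ π.symm p.1 < π.symm p.2}

/-- The transitive closure `tr(R)` of a relation `R ⊆ N × N`. -/
def trCl {N : Type*} (R : Set (N × N)) : Set (N × N) :=
  {p | Relation.TransGen (fun a b => (a, b) ∈ R) p.1 p.2}

/-- `R` is acyclic: no cycle `u_1, …, u_k = u_1` (`k ≥ 2`) with consecutive pairs in `R`;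
equivalently, no `u` with `(u,u)` in the transitive closure of `R`. -/
def Acyclic {N : Type*} (R : Set (N × N)) : Prop :=
  ∀ u : N, ¬ Relation.TransGen (fun a b => (a, b) ∈ R) u u

/-- A set `S` of nodes of the permutohedral graph is *geodetically convex* if for all
`π, σ ∈ S`, every node `τ` lying on a geodesic between `π` and `σ` belongs to `S`. -/
def GeodConvex {N : Type*} [Fintype N] (S : Set (Enum N)) : Prop :=
  ∀ π ∈ S, ∀ σ ∈ S, ∀ τ : Enum N,
    (permGraph N).dist π τ + (permGraph N).dist τ σ = (permGraph N).dist π σ → τ ∈ S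

/-- The *label* on an edge of the permutohedral graph: the (two-element) set of elements of `N`
whose positions differ in the two endpoint enumerations; for an edge given by the adjacent
transposition at `i` this is exactly `{π(i), π(i+1)}`. -/
def edgeLabel {N : Type*} [Fintype N] : Sym2 (Enum N) → Set N :=
  Sym2.lift ⟨fun π σ => {u | π.symm u ≠ σ.symm u}, fun π σ => by
    ext u; simp [ne_comm]⟩

/-- The total order `T_π` on `N` associated with an enumeration `π`. -/
def Tord {N : Type*} [Fintype N] (π : Enum N) : Set (N × N) :=
  {p | π.symm p.1 ≤ π.symm p.2}

/-- For a finite set `N` with `|N| ≥ 2` and a proper subset `T ⊊ N × N`,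
`T` arises as `{(u,v) : π⁻¹(u) ≤ π⁻¹(v) for every π ∈ S}` for some set `S` of enumerations
of `N` if and only if `T` is a poset on `N`. -/
theorem stmt0 {N : Type*} [Fintype N] (h2 : 2 ≤ Fintype.card N)
    (T : Set (N × N)) (hT : T ≠ Set.univ) :
    (∃ S : Set (Enum N), T = {p : N × N | ∀ π ∈ S, π.symm p.1 ≤ π.symm p.2}) ↔
      IsPosetOn T := by
  classical
  constructor
  · rintro ⟨S, rfl⟩
    have hS : S.Nonempty := by
      rcases S.eq_empty_or_nonempty with h | h
      · exfalso; apply hT; subst h; ext p; simp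
      · exact h
    obtain ⟨π0, hπ0⟩ := hS
    refine ⟨fun u π _ => le_refl _, ?_, ?_⟩
    · intro u v huv hvu
      have h1 := huv π0 hπ0
      have h2 := hvu π0 hπ0
      have := le_antisymm h1 h2
      exact π0.symm.injective this
    · intro u v w huv hvw π hπ
      exact le_trans (huv π hπ) (hvw π hπ)
  · intro hP
    obtain ⟨hrefl, hanti, htrans⟩ := hP
    refine ⟨LinExt T, ?_⟩
    ext ⟨u, v⟩
    simp only [Set.mem_setOf_eq]
    constructor
    · intro h π hπ; exact hπ _ h
    · intro h
      by_contra huv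
      -- extend T ∪ {(v,u)} to a partial order, then a linear order
      set r : N → N → Prop := fun a b => (a, b) ∈ T ∨ ((a, v) ∈ T ∧ (u, b) ∈ T) with hr
      haveI : IsPartialOrder N r := by
        refine { refl := ?_, trans := ?_, antisymm := ?_ }
        · exact fun a => Or.inl (hrefl a)
        · rintro a b c (hab | ⟨hav, hub⟩) (hbc | ⟨hbv, huc⟩)
          · exact Or.inl (htrans _ _ _ hab hbc)
          · exact Or.inr ⟨htrans _ _ _ hab hbv, huc⟩
          · exact Or.inr ⟨hav, htrans _ _ _ hub hbc⟩
          · exact absurd (htrans _ _ _ hub hbv) huv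
        · rintro a b (hab | ⟨hav, hub⟩) (hba | ⟨hbv, hua⟩)
          · exact hanti _ _ hab hba
          · exact absurd (htrans _ _ _ (htrans _ _ _ hua hab) hbv) huv
          · exact absurd (htrans _ _ _ (htrans _ _ _ hub hba) hav) huv
          · exact absurd (htrans _ _ _ hub hbv) huv
      obtain ⟨s, hs, hrs⟩ := extend_partialOrder r
      haveI : IsLinearOrder N s := hs
      letI : LinearOrder N :=
        { le := s
          le_refl := fun a => refl_of s a
          le_trans := fun a b c => trans_of s
          le_antisymm := fun a b h1 h2 => antisymm_of s h1 h2
          le_total := fun a b => total_of s a b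
          toDecidableLE := fun a b => Classical.dec _ }
      let e : Fin (Fintype.card N) ≃o N := monoEquivOfFin N rfl
      have hmem : (e : Enum N) ∈ LinExt T := by
        intro p hp
        have : s p.1 p.2 := hrs _ _ (Or.inl hp)
        exact e.symm.le_iff_le.mpr this
      have hle := h _ hmem
      have hsuv : s u v := e.symm.le_iff_le.mp hle
      have hsvu : s v u := hrs _ _ (Or.inr ⟨hrefl v, hrefl u⟩)
      have : u = v := antisymm_of s hsuv hsvu
      exact huv (this ▸ hrefl u)
end

section
/- Let N be a finite set with |N| ≥ 2 and let S be a nonempty set of enumerations of N. Then S = L(T) for some relation T ⊆ N×N if and only if S = L(P) for some poset P on N; moreover such a poset P is unique, i.e. if P and P' are posets on N with L(P) = L(P') then P = P'. -/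
section Aux
open Relation

private lemma exists_linext_of_not_mem {N : Type*} [Fintype N] {P : Set (N × N)}
    (hP : IsPosetOn P) {u v : N} (huv : (u, v) ∉ P) :
    ∃ π : Enum N, π ∈ LinExt P ∧ π.symm v < π.symm u := by
  obtain ⟨hrefl, hanti, htrans⟩ := hP
  set s : N → N → Prop := fun a b => (a, b) ∈ P ∨ ((a, v) ∈ P ∧ (u, b) ∈ P) with hsdef
  haveI hpo : IsPartialOrder N s :=
    { refl := fun a => Or.inl (hrefl a)
      trans := by
        rintro a b c (hab | ⟨hav, hub⟩) (hbc | ⟨hbv, huc⟩)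
        · exact Or.inl (htrans _ _ _ hab hbc)
        · exact Or.inr ⟨htrans _ _ _ hab hbv, huc⟩
        · exact Or.inr ⟨hav, htrans _ _ _ hub hbc⟩
        · exact absurd (htrans _ _ _ hub hbv) huv
      antisymm := by
        rintro a b (hab | ⟨hav, hub⟩) (hba | ⟨hbv, hua⟩)
        · exact hanti _ _ hab hba
        · exact absurd (htrans _ _ _ (htrans _ _ _ hua hab) hbv) huv
        · exact absurd (htrans _ _ _ (htrans _ _ _ hub hba) hav) huv
        · exact absurd (htrans _ _ _ hua hav) huv }
  obtain ⟨t, ht, hst⟩ := extend_partialOrder s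
  haveI := ht
  letI lo : LinearOrder N :=
    { le := t
      le_refl := fun a => refl_of t a
      le_trans := fun a b c => trans_of t
      le_antisymm := fun a b => antisymm_of t
      le_total := fun a b => total_of t a b
      toDecidableLE := Classical.decRel t }
  let e : Fin (Fintype.card N) ≃o N := monoEquivOfFin N rfl
  refine ⟨e.toEquiv, ?_, ?_⟩
  · intro p hp
    have : t p.1 p.2 := hst _ _ (Or.inl hp)
    exact e.symm.le_iff_le.mpr this
  · have hvu : t v u := hst _ _ (Or.inr ⟨hrefl v, hrefl u⟩)
    have hne : v ≠ u := by rintro rfl; exact huv (hrefl v)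
    have hle : e.symm v ≤ e.symm u := e.symm.le_iff_le.mpr hvu
    exact lt_of_le_of_ne hle (fun h => hne (e.symm.injective h))

private lemma linext_eq_of_trans {N : Type*} [Fintype N] (T : Set (N × N)) :
    LinExt (trCl T ∪ diag N) = LinExt T := by
  ext π
  constructor
  · intro h p hp
    exact h p (Or.inl (Relation.TransGen.single hp))
  · intro h p hp
    rcases hp with hp | hp
    · have : ∀ a b : N, Relation.TransGen (fun a b => (a, b) ∈ T) a b →
          π.symm a ≤ π.symm b := by
        intro a b hab
        induction hab with
        | single h' => exact h _ h'
        | tail _ h' ih => exact le_trans ih (h _ h')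
      exact this p.1 p.2 hp
    · exact le_of_eq (congrArg π.symm hp)

end Aux

/-- For `|N| ≥ 2` and a nonempty set `S` of enumerations of `N`:
`S = L(T)` for some relation `T ⊆ N × N` iff `S = L(P)` for some poset `P` on `N`;
moreover such a poset is unique: posets with the same sets of linear extensions coincide. -/
theorem stmt1 {N : Type*} [Fintype N] (h2 : 2 ≤ Fintype.card N)
    (S : Set (Enum N)) (hS : S.Nonempty) :
    ((∃ T : Set (N × N), S = LinExt T) ↔
      (∃ P : Set (N × N), IsPosetOn P ∧ S = LinExt P)) ∧
    (∀ P P' : Set (N × N), IsPosetOn P → IsPosetOn P' → LinExt P = LinExt P' → P = P') := by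
  constructor
  · constructor
    · rintro ⟨T, rfl⟩
      refine ⟨trCl T ∪ diag N, ?_, (linext_eq_of_trans T).symm⟩
      refine ⟨fun u => Or.inr rfl, ?_, ?_⟩
      · intro u v huv hvu
        obtain ⟨π, hπ⟩ := hS
        have hπ' : π ∈ LinExt (trCl T ∪ diag N) := by
          rw [linext_eq_of_trans]; exact hπ
        rcases huv with huv | huv
        · rcases hvu with hvu | hvu
          · exact π.symm.injective
              (le_antisymm (hπ' (u, v) (Or.inl huv)) (hπ' (v, u) (Or.inl hvu)))
          · exact hvu.symm
        · exact huv
      · rintro a b c (hab | hab) (hbc | hbc)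
        · exact Or.inl (hab.trans hbc)
        · exact Or.inl ((show b = c from hbc) ▸ hab)
        · exact Or.inl ((show a = b from hab) ▸ hbc)
        · exact Or.inr ((show a = b from hab).trans (show b = c from hbc))
    · rintro ⟨P, _, hSP⟩
      exact ⟨P, hSP⟩
  · intro P P' hP hP' hLL
    have key : ∀ Q Q' : Set (N × N), IsPosetOn Q → IsPosetOn Q' →
        LinExt Q = LinExt Q' → Q ⊆ Q' := by
      intro Q Q' hQ hQ' hL p hp
      by_contra hnp
      obtain ⟨π, hπ, hlt⟩ := exists_linext_of_not_mem hQ' hnp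
      rw [← hL] at hπ
      exact absurd (hπ p hp) (not_le.mpr hlt)
    exact Set.Subset.antisymm (key P P' hP hP' hLL) (key P' P hP' hP hLL.symm)
end

section
/- Let N be a nonempty finite set and T ⊆ N×N. If T \ Δ is acyclic, then {(u,v) ∈ N×N : π⁻¹(u) ≤ π⁻¹(v) for every π ∈ L(T)} equals tr(T ∪ Δ), the transitive closure of T ∪ Δ. If T \ Δ is not acyclic, then L(T) = ∅ and this set equals N×N. -/

private lemma transGen_union_single_aux {α : Type*} {R : α → α → Prop} {v u a b : α}
    (h : Relation.TransGen (fun x y => R x y ∨ (x = v ∧ y = u)) a b) :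
    Relation.TransGen R a b ∨
      (Relation.ReflTransGen R a v ∧ Relation.ReflTransGen R u b) := by
  induction h with
  | single h =>
    rcases h with h | ⟨rfl, rfl⟩
    · exact Or.inl (Relation.TransGen.single h)
    · exact Or.inr ⟨Relation.ReflTransGen.refl, Relation.ReflTransGen.refl⟩
  | tail _ hb ih =>
    rcases hb with hb | ⟨rfl, rfl⟩
    · rcases ih with ih | ⟨h1, h2⟩
      · exact Or.inl (ih.tail hb)
      · exact Or.inr ⟨h1, h2.tail hb⟩
    · rcases ih with ih | ⟨h1, _⟩
      · exact Or.inr ⟨ih.to_reflTransGen, Relation.ReflTransGen.refl⟩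
      · exact Or.inr ⟨h1, Relation.ReflTransGen.refl⟩

/-- If `T \ Δ` is acyclic then
`{(u,v) : π⁻¹(u) ≤ π⁻¹(v) for every π ∈ L(T)} = tr(T ∪ Δ)`;
if `T \ Δ` is not acyclic then `L(T) = ∅` and this set is all of `N × N`. -/
theorem stmt4 {N : Type*} [Fintype N] [Nonempty N] (T : Set (N × N)) :
    (Acyclic (T \ diag N) →
      {p : N × N | ∀ π ∈ LinExt T, π.symm p.1 ≤ π.symm p.2} = trCl (T ∪ diag N)) ∧
    (¬ Acyclic (T \ diag N) →
      LinExt T = ∅ ∧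
      {p : N × N | ∀ π ∈ LinExt T, π.symm p.1 ≤ π.symm p.2} = Set.univ) := by
  classical
  have key : ∀ π ∈ LinExt T, ∀ a b : N,
      Relation.TransGen (fun x y => (x, y) ∈ T \ diag N) a b → π.symm a < π.symm b := by
    intro π hπ a b h
    induction h with
    | single h =>
      rcases h with ⟨h1, h2⟩
      exact lt_of_le_of_ne (hπ _ h1) (fun he => h2 (π.symm.injective he))
    | tail _ hb ih =>
      rcases hb with ⟨h1, h2⟩
      exact lt_of_lt_of_le ih (hπ _ h1)
  constructor
  · intro hac
    ext ⟨u, v⟩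
    simp only [Set.mem_setOf_eq]
    constructor
    · intro h
      by_contra hnot
      -- u ≠ v
      have hne : u ≠ v := by
        rintro rfl
        exact hnot (Relation.TransGen.single (Or.inr rfl))
      -- augmented relation
      set R : N → N → Prop := fun x y => (x, y) ∈ T \ diag N with hR
      set R' : N → N → Prop := fun x y => R x y ∨ (x = v ∧ y = u) with hR'
      have hR'ac : ∀ w, ¬ Relation.TransGen R' w w := by
        intro w hw
        rcases transGen_union_single_aux hw with hw | ⟨h1, h2⟩
        · exact hac w hw
        · have huv : Relation.ReflTransGen R u v := h2.trans h1
          rcases (Relation.reflTransGen_iff_eq_or_transGen).mp huv with he | ht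
          · exact hne he.symm
          · refine hnot (Relation.TransGen.mono ?_ _ _ ht)
            intro x y hxy
            exact Or.inl hxy.1
      -- partial order from reflexive transitive closure of R'
      have hanti : ∀ a b : N, Relation.ReflTransGen R' a b →
          Relation.ReflTransGen R' b a → a = b := by
        intro a b h1 h2
        by_contra hab
        rcases (Relation.reflTransGen_iff_eq_or_transGen).mp h1 with he | ht1
        · exact hab he.symm
        rcases (Relation.reflTransGen_iff_eq_or_transGen).mp h2 with he | ht2
        · exact hab he
        exact hR'ac a (ht1.trans ht2)
      haveI hpo : IsPartialOrder N (Relation.ReflTransGen R') :=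
        { refl := fun a => Relation.ReflTransGen.refl
          trans := fun a b c h1 h2 => h1.trans h2
          antisymm := hanti }
      obtain ⟨s, hs, hrs⟩ := extend_partialOrder (Relation.ReflTransGen R')
      haveI := hs
      letI : LinearOrder N :=
        { le := s
          lt := fun a b => s a b ∧ ¬ s b a
          le_refl := fun a => refl_of s a
          le_trans := fun a b c => trans_of s
          le_antisymm := fun a b => antisymm_of s
          le_total := fun a b => total_of s a b
          lt_iff_le_not_ge := fun _ _ => Iff.rfl
          toDecidableLE := fun a b => Classical.dec _ }
      let π0 : Fin (Fintype.card N) ≃o N := monoEquivOfFin N rfl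
      let π : Enum N := π0.toEquiv
      have hmem : π ∈ LinExt T := by
        intro p hp
        by_cases hpe : p.1 = p.2
        · rw [hpe]
        · have : s p.1 p.2 := hrs _ _ (Relation.ReflTransGen.single (Or.inl ⟨hp, hpe⟩))
          exact (π0.symm.le_iff_le).mpr this
      have hvu : π.symm v < π.symm u := by
        have hsvu : s v u := hrs _ _ (Relation.ReflTransGen.single (Or.inr ⟨rfl, rfl⟩))
        have h1 : π.symm v ≤ π.symm u := (π0.symm.le_iff_le).mpr hsvu
        exact lt_of_le_of_ne h1 (fun he => hne.symm (π.symm.injective he))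
      exact absurd (h π hmem) (not_le.mpr hvu)
    · intro h π hπ
      have step : ∀ a b : N, Relation.TransGen (fun x y => (x, y) ∈ T ∪ diag N) a b →
          π.symm a ≤ π.symm b := by
        intro a b h
        induction h with
        | single h =>
          rcases h with h | h
          · exact hπ _ h
          · exact le_of_eq (congrArg _ h)
        | tail _ hb ih =>
          rcases hb with hb | hb
          · exact le_trans ih (hπ _ hb)
          · exact ih.trans (le_of_eq (congrArg _ hb))
      exact step u v h
  · intro hac
    simp only [Acyclic, not_forall, not_not] at hac
    obtain ⟨w, hw⟩ := hac
    have hempty : LinExt T = ∅ := by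
      ext π
      simp only [Set.mem_empty_iff_false, iff_false]
      intro hπ
      exact lt_irrefl _ (key π hπ w w hw)
    refine ⟨hempty, ?_⟩
    ext p
    simp only [Set.mem_setOf_eq, Set.mem_univ, iff_true]
    intro π hπ
    rw [hempty] at hπ
    exact absurd hπ (Set.notMem_empty π)
end

section
/- A walk between enumerations π and σ in the permutohedral graph is a geodesic (i.e. has the minimal possible length among walks from π to σ) if and only if no label is repeated on its edges; moreover, if this is the case, then the set of labels occurring on the edges of the walk equals the set Inv[π,σ] of inversions between π and σ. -/
section Aux

open SimpleGraph

variable {N : Type*} [Fintype N]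

/-- The symmetric "inverted pair" predicate. -/
def Invd (π σ : Enum N) (u v : N) : Prop :=
  (π.symm u < π.symm v ∧ σ.symm v < σ.symm u) ∨ (π.symm v < π.symm u ∧ σ.symm u < σ.symm v)

lemma invd_symm {π σ : Enum N} {u v : N} (h : Invd π σ u v) : Invd π σ v u := h.symm

lemma invd_ne {π σ : Enum N} {u v : N} (h : Invd π σ u v) : u ≠ v := by
  rintro rfl
  rcases h with ⟨h1, -⟩ | ⟨h1, -⟩ <;> exact lt_irrefl _ h1

lemma not_lt_symm_iff (π : Enum N) {u v : N} (huv : u ≠ v) :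
    ¬ (π.symm u < π.symm v) ↔ π.symm v < π.symm u := by
  rw [not_lt, lt_iff_le_and_ne]
  simp only [iff_self_and]
  intro _
  exact fun e => huv (π.symm.injective e.symm)

/-- cocycle / trichotomy property of `Invd` -/
lemma invd_xor (π σ τ : Enum N) {u v : N} (huv : u ≠ v) :
    Invd π τ u v ↔ ¬ (Invd π σ u v ↔ Invd σ τ u v) := by
  have h1 := not_lt_symm_iff π huv
  have h2 := not_lt_symm_iff σ huv
  have h3 := not_lt_symm_iff τ huv
  unfold Invd
  tauto

lemma mem_invBetween_pair {π σ : Enum N} {u v : N} (huv : u ≠ v) :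
    ({u, v} : Set N) ∈ InvBetween π σ ↔ Invd π σ u v := by
  constructor
  · rintro ⟨a, b, hab, h1, h2⟩
    rcases Set.pair_eq_pair_iff.mp hab with ⟨rfl, rfl⟩ | ⟨rfl, rfl⟩
    · exact Or.inl ⟨h1, h2⟩
    · exact Or.inr ⟨h1, h2⟩
  · rintro (⟨h1, h2⟩ | ⟨h1, h2⟩)
    · exact ⟨u, v, rfl, h1, h2⟩
    · exact ⟨v, u, Set.pair_comm u v, h1, h2⟩

lemma mem_invBetween_iff {π σ : Enum N} {L : Set N} :
    L ∈ InvBetween π σ ↔ ∃ u v : N, u ≠ v ∧ L = {u, v} ∧ Invd π σ u v := by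
  constructor
  · rintro ⟨u, v, rfl, h1, h2⟩
    exact ⟨u, v, invd_ne (Or.inl ⟨h1, h2⟩), rfl, Or.inl ⟨h1, h2⟩⟩
  · rintro ⟨u, v, huv, rfl, h⟩
    exact (mem_invBetween_pair huv).mpr h

lemma invBetween_self (π : Enum N) : InvBetween π π = ∅ := by
  ext L
  simp only [Set.mem_empty_iff_false, iff_false, mem_invBetween_iff]
  rintro ⟨u, v, huv, rfl, (⟨h1, h2⟩ | ⟨h1, h2⟩)⟩ <;> exact absurd (h1.trans h2) (lt_irrefl _)

end Aux
section Aux2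

open SimpleGraph

variable {N : Type*} [Fintype N]

lemma adjTranspAt_symm {π σ : Enum N} {i : Fin (Fintype.card N)} {h : (i : ℕ) + 1 < Fintype.card N}
    (ha : AdjTranspAt π σ i h) : AdjTranspAt σ π i h :=
  ⟨ha.2.1.symm, ha.1.symm, fun k hk hk' => (ha.2.2 k hk hk').symm⟩

lemma ip_ne {i : Fin (Fintype.card N)} (h : (i : ℕ) + 1 < Fintype.card N) :
    i ≠ (⟨(i : ℕ) + 1, h⟩ : Fin (Fintype.card N)) := by
  intro e
  have := congrArg Fin.val e
  simp at this

lemma adj_symm_eq {π σ : Enum N} {i : Fin (Fintype.card N)} {h : (i : ℕ) + 1 < Fintype.card N}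
    (ha : AdjTranspAt π σ i h) (u : N) :
    σ.symm u = Equiv.swap i ⟨(i : ℕ) + 1, h⟩ (π.symm u) := by
  rw [Equiv.symm_apply_eq]
  rcases eq_or_ne (π.symm u) i with e | hki
  · rw [e, Equiv.swap_apply_left, ← ha.1, ← e, π.apply_symm_apply]
  · rcases eq_or_ne (π.symm u) (⟨(i : ℕ) + 1, h⟩ : Fin (Fintype.card N)) with e | hkip
    · rw [e, Equiv.swap_apply_right, ← ha.2.1, ← e, π.apply_symm_apply]
    · rw [Equiv.swap_apply_of_ne_of_ne hki hkip, ← ha.2.2 _ hki hkip, π.apply_symm_apply]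

/-- third conjunct of the statement -/
lemma edgeLabel_adj {π σ : Enum N} {i : Fin (Fintype.card N)} {h : (i : ℕ) + 1 < Fintype.card N}
    (ha : AdjTranspAt π σ i h) :
    edgeLabel s(π, σ) = ({π i, π ⟨(i : ℕ) + 1, h⟩} : Set N) := by
  ext u
  have hs := adj_symm_eq ha u
  show π.symm u ≠ σ.symm u ↔ _
  rw [hs, ne_comm, Equiv.swap_apply_ne_self_iff]
  simp only [Set.mem_insert_iff, Set.mem_singleton_iff]
  constructor
  · rintro ⟨-, (e | e)⟩
    · left; rw [← e, π.apply_symm_apply]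
    · right; rw [← e, π.apply_symm_apply]
  · rintro (rfl | rfl)
    · exact ⟨ip_ne h, Or.inl (π.symm_apply_apply i)⟩
    · exact ⟨ip_ne h, Or.inr (π.symm_apply_apply _)⟩

lemma swap_lt_iff {n : ℕ} {i ip k l : Fin n} (hip : (ip : ℕ) = (i : ℕ) + 1) (hkl : k ≠ l) :
    ((k < l ∧ Equiv.swap i ip l < Equiv.swap i ip k) ∨
      (l < k ∧ Equiv.swap i ip k < Equiv.swap i ip l)) ↔
    ((k = i ∧ l = ip) ∨ (k = ip ∧ l = i)) := by
  simp only [Equiv.swap_apply_def]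
  split_ifs <;> (simp only [Fin.lt_def, Fin.ext_iff, ne_eq] at *) <;> omega

/-- the only inverted pair across an edge is its label -/
lemma invd_adj {π σ : Enum N} {i : Fin (Fintype.card N)} {h : (i : ℕ) + 1 < Fintype.card N}
    (ha : AdjTranspAt π σ i h) {u v : N} (huv : u ≠ v) :
    Invd π σ u v ↔ ({u, v} : Set N) = {π i, π ⟨(i : ℕ) + 1, h⟩} := by
  have hkl : π.symm u ≠ π.symm v := fun e => huv (π.symm.injective e)
  have hpair : ({u, v} : Set N) = {π i, π ⟨(i : ℕ) + 1, h⟩} ↔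
      (π.symm u = i ∧ π.symm v = ⟨(i : ℕ) + 1, h⟩) ∨
      (π.symm u = ⟨(i : ℕ) + 1, h⟩ ∧ π.symm v = i) := by
    rw [Set.pair_eq_pair_iff]
    constructor
    · rintro (⟨rfl, rfl⟩ | ⟨rfl, rfl⟩)
      · exact Or.inl ⟨π.symm_apply_apply i, π.symm_apply_apply _⟩
      · exact Or.inr ⟨π.symm_apply_apply _, π.symm_apply_apply i⟩
    · rintro (⟨e1, e2⟩ | ⟨e1, e2⟩)
      · exact Or.inl ⟨by rw [← π.apply_symm_apply u, e1], by rw [← π.apply_symm_apply v, e2]⟩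
      · exact Or.inr ⟨by rw [← π.apply_symm_apply u, e1], by rw [← π.apply_symm_apply v, e2]⟩
  rw [hpair]
  unfold Invd
  rw [adj_symm_eq ha u, adj_symm_eq ha v]
  exact swap_lt_iff rfl hkl

end Aux2
section Aux3

open SimpleGraph

variable {N : Type*} [Fintype N]

lemma invd_edge_xor {π π' τ : Enum N} {i : Fin (Fintype.card N)}
    {h : (i : ℕ) + 1 < Fintype.card N} (ha : AdjTranspAt π π' i h) {u v : N} (huv : u ≠ v) :
    Invd π τ u v ↔ ¬ (({u, v} : Set N) = {π i, π ⟨(i : ℕ) + 1, h⟩} ↔ Invd π' τ u v) := by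
  rw [invd_xor π π' τ huv, invd_adj ha huv]

lemma pi_ne_pi {π : Enum N} {i : Fin (Fintype.card N)} (h : (i : ℕ) + 1 < Fintype.card N) :
    π i ≠ π ⟨(i : ℕ) + 1, h⟩ := fun e => absurd (π.injective e) (ip_ne h)

lemma mem_inv_edge {π π' τ : Enum N} {i : Fin (Fintype.card N)}
    {h : (i : ℕ) + 1 < Fintype.card N} (ha : AdjTranspAt π π' i h) (L : Set N) :
    L ∈ InvBetween π τ ↔
      ((L = ({π i, π ⟨(i : ℕ) + 1, h⟩} : Set N) ∧ L ∉ InvBetween π' τ) ∨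
       (L ≠ ({π i, π ⟨(i : ℕ) + 1, h⟩} : Set N) ∧ L ∈ InvBetween π' τ)) := by
  rcases eq_or_ne L ({π i, π ⟨(i : ℕ) + 1, h⟩} : Set N) with rfl | hL
  · have hne := pi_ne_pi (π := π) h
    rw [mem_invBetween_pair hne, mem_invBetween_pair hne, invd_edge_xor ha hne]
    tauto
  · simp only [hL, ne_eq, not_true_eq_false, false_and, false_or, not_false_eq_true, true_and]
    rw [mem_invBetween_iff, mem_invBetween_iff]
    constructor
    · rintro ⟨u, v, huv, rfl, hI⟩
      refine ⟨u, v, huv, rfl, ?_⟩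
      have hx := (invd_edge_xor ha (τ := τ) huv).mp hI
      by_contra hb
      exact hx (iff_of_false hL hb)
    · rintro ⟨u, v, huv, rfl, hI⟩
      refine ⟨u, v, huv, rfl, ?_⟩
      rw [invd_edge_xor ha (τ := τ) huv]
      exact fun e => hL (e.mpr hI)

/-- Version with the label expressed via `edgeLabel`. -/
lemma mem_inv_edge' {π π' τ : Enum N} (hadj : AdjTransp π π') (L : Set N) :
    L ∈ InvBetween π τ ↔
      ((L = edgeLabel s(π, π') ∧ L ∉ InvBetween π' τ) ∨
       (L ≠ edgeLabel s(π, π') ∧ L ∈ InvBetween π' τ)) := by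
  obtain ⟨i, h, ha⟩ := hadj
  rw [edgeLabel_adj ha]
  exact mem_inv_edge ha L

lemma inv_edge_insert {π π' τ : Enum N} (hadj : AdjTransp π π')
    (hl : edgeLabel s(π, π') ∉ InvBetween π' τ) :
    InvBetween π τ = insert (edgeLabel s(π, π')) (InvBetween π' τ) := by
  ext L
  rw [mem_inv_edge' hadj L, Set.mem_insert_iff]
  rcases eq_or_ne L (edgeLabel s(π, π')) with rfl | hL <;> tauto

lemma inv_edge_subset {π π' τ : Enum N} (hadj : AdjTransp π π') :
    InvBetween π τ ⊆ insert (edgeLabel s(π, π')) (InvBetween π' τ) := by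
  intro L hL
  rw [mem_inv_edge' hadj L] at hL
  rw [Set.mem_insert_iff]
  tauto

lemma inv_edge_diff {π π' τ : Enum N} (hadj : AdjTransp π π')
    (hl : edgeLabel s(π, π') ∈ InvBetween π τ) :
    InvBetween π' τ = InvBetween π τ \ {edgeLabel s(π, π')} := by
  ext L
  have h1 := mem_inv_edge' (τ := τ) hadj L
  have h2 := mem_inv_edge' (τ := τ) hadj (edgeLabel s(π, π'))
  simp only [Set.mem_diff, Set.mem_singleton_iff]
  rcases eq_or_ne L (edgeLabel s(π, π')) with rfl | hL <;> tauto

lemma eq_of_invBetween_empty {π σ : Enum N} (h : InvBetween π σ = ∅) : π = σ := by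
  have key : ∀ u v : N, π.symm u < π.symm v → σ.symm u < σ.symm v := by
    intro u v hlt
    have huv : u ≠ v := by
      rintro rfl; exact lt_irrefl _ hlt
    by_contra hc
    rw [not_lt_symm_iff σ huv] at hc
    have hm : ({u, v} : Set N) ∈ InvBetween π σ := ⟨u, v, rfl, hlt, hc⟩
    rw [h] at hm
    exact hm
  have hmono : StrictMono (π.trans σ.symm) := by
    intro k l hkl
    refine key (π k) (π l) ?_
    simpa using hkl
  have hid : ∀ k, (π.trans σ.symm) k = k := by
    intro k
    have h2 := congrFun (congrArg (fun g : (Fin (Fintype.card N) ≃o Fin (Fintype.card N)) =>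
        (g : Fin (Fintype.card N) → Fin (Fintype.card N)))
      (Subsingleton.elim
        (StrictMono.orderIsoOfSurjective _ hmono (π.trans σ.symm).surjective)
        (OrderIso.refl _))) k
    simpa using h2
  refine Equiv.ext fun k => ?_
  have := congrArg σ (hid k)
  simpa using this

lemma strictMono_of_adj_lt {n : ℕ} {α : Type*} [Preorder α] {f : Fin n → α}
    (hf : ∀ (i : Fin n) (h : (i : ℕ) + 1 < n), f i < f ⟨(i : ℕ) + 1, h⟩) : StrictMono f := by
  match n, f, hf with
  | 0, f, hf => exact fun k => k.elim0
  | (m + 1), f, hf =>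
    rw [Fin.strictMono_iff_lt_succ]
    intro i
    have h : ((i.castSucc : Fin (m + 1)) : ℕ) + 1 < m + 1 := by
      have := i.isLt
      simp only [Fin.coe_castSucc]
      omega
    have hsucc : i.succ = ⟨((i.castSucc : Fin (m + 1)) : ℕ) + 1, h⟩ := Fin.ext (by simp)
    rw [hsucc]
    exact hf i.castSucc h

lemma exists_descent {π σ : Enum N} (hne : (InvBetween π σ).Nonempty) :
    ∃ (i : Fin (Fintype.card N)) (h : (i : ℕ) + 1 < Fintype.card N),
      σ.symm (π ⟨(i : ℕ) + 1, h⟩) < σ.symm (π i) := by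
  obtain ⟨L, hL⟩ := hne
  rw [mem_invBetween_iff] at hL
  obtain ⟨u, v, huv, -, hI⟩ := hL
  by_contra hc
  push_neg at hc
  have hmono : StrictMono (fun k => σ.symm (π k)) := by
    refine strictMono_of_adj_lt fun i h => ?_
    refine lt_of_le_of_ne (hc i h) fun e => ?_
    exact pi_ne_pi h (σ.symm.injective e)
  rcases hI with ⟨h1, h2⟩ | ⟨h1, h2⟩
  · have := hmono h1
    simp only [π.apply_symm_apply] at this
    exact absurd (this.trans h2) (lt_irrefl _)
  · have := hmono h1
    simp only [π.apply_symm_apply] at this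
    exact absurd (this.trans h2) (lt_irrefl _)

end Aux3
section Aux4

open SimpleGraph

variable {N : Type*} [Fintype N]

lemma exists_walk_ncard (k : ℕ) : ∀ π σ : Enum N, (InvBetween π σ).ncard = k →
    ∃ w : (permGraph N).Walk π σ, w.length = k := by
  induction k with
  | zero =>
    intro π σ hk
    have he : InvBetween π σ = ∅ := (Set.ncard_eq_zero (Set.toFinite _)).mp hk
    have := eq_of_invBetween_empty he
    subst this
    exact ⟨Walk.nil, rfl⟩
  | succ k ih =>
    intro π σ hk
    have hne : (InvBetween π σ).Nonempty := by
      rw [Set.nonempty_iff_ne_empty]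
      intro he
      rw [he] at hk
      simp at hk
    obtain ⟨i, h, hdesc⟩ := exists_descent hne
    set π' : Enum N := (Equiv.swap i ⟨(i : ℕ) + 1, h⟩).trans π with hπ'
    have ha : AdjTranspAt π π' i h := by
      refine ⟨?_, ?_, ?_⟩
      · show π i = π (Equiv.swap i ⟨(i : ℕ) + 1, h⟩ ⟨(i : ℕ) + 1, h⟩)
        rw [Equiv.swap_apply_right]
      · show π ⟨(i : ℕ) + 1, h⟩ = π (Equiv.swap i ⟨(i : ℕ) + 1, h⟩ i)
        rw [Equiv.swap_apply_left]
      · intro k hk1 hk2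
        show π k = π (Equiv.swap i ⟨(i : ℕ) + 1, h⟩ k)
        rw [Equiv.swap_apply_of_ne_of_ne hk1 hk2]
    have hadj : AdjTransp π π' := ⟨i, h, ha⟩
    have hlab : edgeLabel s(π, π') = ({π i, π ⟨(i : ℕ) + 1, h⟩} : Set N) := edgeLabel_adj ha
    have hmem : edgeLabel s(π, π') ∈ InvBetween π σ := by
      rw [hlab, mem_invBetween_pair (pi_ne_pi h)]
      left
      refine ⟨?_, hdesc⟩
      rw [π.symm_apply_apply, π.symm_apply_apply, Fin.lt_def]
      simp
    have hdiff := inv_edge_diff (τ := σ) hadj hmem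
    have hcard : (InvBetween π' σ).ncard = k := by
      rw [hdiff, Set.ncard_diff_singleton_of_mem hmem, hk]
      omega
    obtain ⟨w', hw'⟩ := ih π' σ hcard
    exact ⟨Walk.cons (show (permGraph N).Adj π π' from hadj) w', by simp [hw']⟩

lemma inv_subset_labels {π σ : Enum N} (w : (permGraph N).Walk π σ) :
    InvBetween π σ ⊆ {L : Set N | L ∈ w.edges.map edgeLabel} := by
  induction w with
  | nil => rw [invBetween_self]; exact Set.empty_subset _
  | cons h p ih =>
    intro L hL
    have hm := inv_edge_subset h hL
    rcases Set.mem_insert_iff.mp hm with rfl | hmem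
    · simp [Walk.edges_cons]
    · have := ih hmem
      simp only [Set.mem_setOf_eq, Walk.edges_cons, List.map_cons, List.mem_cons] at this ⊢
      tauto

lemma labels_eq_inv {π σ : Enum N} (w : (permGraph N).Walk π σ)
    (hn : (w.edges.map edgeLabel).Nodup) :
    {L : Set N | L ∈ w.edges.map edgeLabel} = InvBetween π σ := by
  induction w with
  | nil =>
    rw [invBetween_self]
    ext L
    simp
  | @cons a b c h p ih =>
    rw [Walk.edges_cons, List.map_cons] at hn ⊢
    obtain ⟨hhead, htail⟩ := List.nodup_cons.mp hn
    have hset := ih htail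
    have hnotmem : edgeLabel s(a, b) ∉ InvBetween b c := by
      rw [← hset]
      exact fun hc => hhead (by simpa using hc)
    rw [inv_edge_insert h hnotmem, ← hset]
    ext L
    simp [List.mem_cons]

lemma ncard_set_of_mem_le {α : Type*} (l : List α) : {x | x ∈ l}.ncard ≤ l.length := by
  classical
  have he : {x | x ∈ l} = ↑l.toFinset := by ext x; simp
  rw [he, Set.ncard_coe_finset]
  exact l.toFinset_card_le

lemma ncard_set_of_mem_lt {α : Type*} {l : List α} (h : ¬ l.Nodup) :
    {x | x ∈ l}.ncard < l.length := by
  classical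
  have he : {x | x ∈ l} = ↑l.toFinset := by ext x; simp
  rw [he, Set.ncard_coe_finset, List.card_toFinset]
  have hsub := l.dedup_sublist
  rcases lt_or_eq_of_le hsub.length_le with hlt | heq
  · exact hlt
  · exact absurd (hsub.eq_of_length heq ▸ l.nodup_dedup) h

lemma ncard_set_of_mem_eq {α : Type*} {l : List α} (h : l.Nodup) :
    {x | x ∈ l}.ncard = l.length := by
  classical
  have he : {x | x ∈ l} = ↑l.toFinset := by ext x; simp
  rw [he, Set.ncard_coe_finset, List.toFinset_card_of_nodup h]

lemma dist_eq_ncard (π σ : Enum N) :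
    (permGraph N).dist π σ = (InvBetween π σ).ncard := by
  obtain ⟨w, hw⟩ := exists_walk_ncard (InvBetween π σ).ncard π σ rfl
  have hreach : (permGraph N).Reachable π σ := ⟨w⟩
  refine le_antisymm (hw ▸ dist_le w) ?_
  obtain ⟨p, hp⟩ := hreach.exists_walk_length_eq_dist
  rw [← hp]
  calc (InvBetween π σ).ncard ≤ {L : Set N | L ∈ p.edges.map edgeLabel}.ncard :=
        Set.ncard_le_ncard (inv_subset_labels p) (Set.toFinite _)
    _ ≤ (p.edges.map edgeLabel).length := ncard_set_of_mem_le _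
    _ = p.length := by rw [List.length_map, Walk.length_edges]

end Aux4

/-- A walk `w` between enumerations `π` and `σ` in the permutohedral graph is
a geodesic (i.e. its length equals the graph distance `dist(π,σ)`) iff no label on its
edges is repeated; moreover, in that case the set of labels on its edges is exactly the
set `Inv[π,σ]` of inversions between `π` and `σ`. (The final conjunct records that
`edgeLabel` is indeed the edge labeling from the paper: on the edge given by the adjacent
transposition at position `i` it is the two-element set `{π(i), π(i+1)}`.) -/
theorem stmt6 {N : Type*} [Fintype N] [Nonempty N] (π σ : Enum N)
    (w : (permGraph N).Walk π σ) :
    ((w.length = (permGraph N).dist π σ) ↔ (w.edges.map edgeLabel).Nodup) ∧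
    ((w.edges.map edgeLabel).Nodup →
      {L : Set N | L ∈ w.edges.map edgeLabel} = InvBetween π σ) ∧
    (∀ (π' σ' : Enum N) (i : Fin (Fintype.card N)) (h : (i : ℕ) + 1 < Fintype.card N),
      AdjTranspAt π' σ' i h →
        edgeLabel s(π', σ') = ({π' i, π' ⟨(i : ℕ) + 1, h⟩} : Set N)) := by
  refine ⟨?_, fun hn => labels_eq_inv w hn, fun π' σ' i h ha => edgeLabel_adj ha⟩
  constructor
  · intro hlen
    by_contra hn
    have h1 : (InvBetween π σ).ncard < (w.edges.map edgeLabel).length :=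
      lt_of_le_of_lt (Set.ncard_le_ncard (inv_subset_labels w) (Set.toFinite _))
        (ncard_set_of_mem_lt hn)
    rw [List.length_map, SimpleGraph.Walk.length_edges, hlen, dist_eq_ncard] at h1
    exact lt_irrefl _ h1
  · intro hn
    rw [dist_eq_ncard, ← labels_eq_inv w hn, ncard_set_of_mem_eq hn, List.length_map,
      SimpleGraph.Walk.length_edges]
end

section
/- Let P be a poset on a nonempty finite set N and S = L(P). For any two distinct elements u, v ∈ N: u and v are incomparable in P (neither (u,v) ∈ P nor (v,u) ∈ P) if and only if {u,v} ∈ Inv(S), i.e. there exist adjacent enumerations π, σ ∈ S whose connecting edge in the permutohedral graph is labeled {u,v}. -/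
section StmtNineHelper

variable {N : Type*} [Fintype N]

private theorem stmt9_exists_adj (P : Set (N × N)) (hP : IsPosetOn P) (u v : N)
    (huv : u ≠ v) (h1 : (u, v) ∉ P) (h2 : (v, u) ∉ P) :
    ∃ π ∈ LinExt P, ∃ σ ∈ LinExt P, AdjLabeled π σ u v := by
  classical
  obtain ⟨hrefl, hanti, htrans⟩ := hP
  haveI hpo : IsPartialOrder N (fun a b => (a, b) ∈ P) :=
    { refl := hrefl
      trans := fun a b c hab hbc => htrans a b c hab hbc
      antisymm := fun a b hab hba => hanti a b hab hba }
  obtain ⟨s, hs, hPs⟩ := extend_partialOrder (fun a b => (a, b) ∈ P)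
  haveI := hs
  -- rank function for s
  set g : N → ℕ := fun w => (Finset.univ.filter fun x => s x w).card with hg
  have gmono : ∀ {x y}, s x y → g x ≤ g y := by
    intro x y hxy
    exact Finset.card_le_card (fun z hz => by
      simp only [Finset.mem_filter, Finset.mem_univ, true_and] at *
      exact trans_of s hz hxy)
  have gstrict : ∀ {x y}, s x y → x ≠ y → g x < g y := by
    intro x y hxy hne
    apply Finset.card_lt_card
    constructor
    · exact fun z hz => by
        simp only [Finset.mem_filter, Finset.mem_univ, true_and] at *
        exact trans_of s hz hxy
    · intro hsub
      have hy : y ∈ Finset.univ.filter fun x => s x y := by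
        simp [refl_of s y]
      have := hsub hy
      simp only [Finset.mem_filter, Finset.mem_univ, true_and] at this
      exact hne (antisymm_of s this hxy).symm
  have ginj : Function.Injective g := by
    intro x y hxy
    by_contra hne
    rcases total_of s x y with h | h
    · exact absurd hxy (Nat.ne_of_lt (gstrict h hne))
    · exact absurd hxy.symm (Nat.ne_of_lt (gstrict h (Ne.symm hne)))
  -- class function
  set Dp : N → Prop := fun w => w ≠ u ∧ w ≠ v ∧ ((w, u) ∈ P ∨ (w, v) ∈ P) with hDp
  set c : N → ℕ := fun w =>
    if w = u then 1 else if w = v then 2 else if Dp w then 0 else 3 with hc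
  have hcu : c u = 1 := by simp [hc]
  have hcv : c v = 2 := by simp [hc, huv.symm]
  have hcD : ∀ w, Dp w → c w = 0 := by
    intro w hw
    simp only [hc]
    rw [if_neg hw.1, if_neg hw.2.1, if_pos hw]
  have hcR : ∀ w, w ≠ u → w ≠ v → ¬ Dp w → c w = 3 := by
    intro w hwu hwv hwD
    simp only [hc]
    rw [if_neg hwu, if_neg hwv, if_neg hwD]
  have hcu' : ∀ w, c w = 1 → w = u := by
    intro w hw
    by_contra h
    simp only [hc, if_neg h] at hw
    split_ifs at hw <;> omega
  have hcv' : ∀ w, c w = 2 → w = v := by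
    intro w hw
    by_contra h
    by_cases h' : w = u
    · rw [h', hcu] at hw; omega
    · simp only [hc, if_neg h', if_neg h] at hw
      split_ifs at hw <;> omega
  have einj : Function.Injective (fun w => toLex (c w, g w)) := by
    intro x y hxy
    have := congrArg (fun p => (ofLex p).2) hxy
    exact ginj this
  letI : LinearOrder N := LinearOrder.lift' (fun w => toLex (c w, g w)) einj
  have le_def : ∀ a b : N, a ≤ b ↔ (c a < c b ∨ (c a = c b ∧ g a ≤ g b)) := by
    intro a b
    exact Prod.Lex.toLex_le_toLex (x := (c a, g a)) (y := (c b, g b))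
  have lt_def : ∀ a b : N, a < b ↔ (c a < c b ∨ (c a = c b ∧ g a < g b)) := by
    intro a b
    exact Prod.Lex.toLex_lt_toLex (x := (c a, g a)) (y := (c b, g b))
  -- classes of related elements, generic case
  have hclass : ∀ x y : N, (x, y) ∈ P → x ≠ u → x ≠ v → y ≠ u → y ≠ v →
      (c x < c y ∨ (c x = c y ∧ g x ≤ g y)) := by
    intro x y hxy hxu hxv hyu hyv
    have hgy : g x ≤ g y := gmono (hPs x y hxy)
    by_cases hyD : Dp y
    · have hxD : Dp x := by
        refine ⟨hxu, hxv, ?_⟩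
        rcases hyD.2.2 with h | h
        · exact Or.inl (htrans _ _ _ hxy h)
        · exact Or.inr (htrans _ _ _ hxy h)
      exact Or.inr ⟨by rw [hcD x hxD, hcD y hyD], hgy⟩
    · by_cases hxD : Dp x
      · left; rw [hcD x hxD, hcR y hyu hyv hyD]; omega
      · exact Or.inr ⟨by rw [hcR x hxu hxv hxD, hcR y hyu hyv hyD], hgy⟩
  have hyu_case : ∀ x : N, (x, u) ∈ P → x ≠ u → x ≠ v → Dp x :=
    fun x hx hxu hxv => ⟨hxu, hxv, Or.inl hx⟩
  have hyv_case : ∀ x : N, (x, v) ∈ P → x ≠ u → x ≠ v → Dp x :=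
    fun x hx hxu hxv => ⟨hxu, hxv, Or.inr hx⟩
  have hux_case : ∀ y : N, (u, y) ∈ P → y ≠ u → y ≠ v ∧ c y = 3 := by
    intro y hy hyu
    have hyv : y ≠ v := fun h => h1 (h ▸ hy)
    have hyD : ¬ Dp y := by
      rintro ⟨-, -, h | h⟩
      · exact hyu (hanti _ _ h hy)
      · exact h1 (htrans _ _ _ hy h)
    exact ⟨hyv, hcR y hyu hyv hyD⟩
  have hvx_case : ∀ y : N, (v, y) ∈ P → y ≠ v → y ≠ u ∧ c y = 3 := by
    intro y hy hyv
    have hyu : y ≠ u := fun h => h2 (h ▸ hy)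
    have hyD : ¬ Dp y := by
      rintro ⟨-, -, h | h⟩
      · exact h2 (htrans _ _ _ hy h)
      · exact hyv (hanti _ _ h hy)
    exact ⟨hyu, hcR y hyu hyv hyD⟩
  -- first order extends P
  have hle1 : ∀ x y : N, (x, y) ∈ P → x ≤ y := by
    intro x y hxy
    by_cases hne : x = y
    · exact hne ▸ le_refl x
    rw [le_def]
    by_cases hxu : x = u
    · have hyu : y ≠ u := fun h => hne (hxu.trans h.symm)
      have := hux_case y (by rw [hxu] at hxy; exact hxy) hyu
      left; rw [hxu, hcu, this.2]; omega
    by_cases hxv : x = v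
    · have hyv : y ≠ v := fun h => hne (hxv.trans h.symm)
      have := hvx_case y (by rw [hxv] at hxy; exact hxy) hyv
      left; rw [hxv, hcv, this.2]; omega
    by_cases hyu : y = u
    · have hxD := hyu_case x (by rw [hyu] at hxy; exact hxy) hxu hxv
      left; rw [hyu, hcu, hcD x hxD]; omega
    by_cases hyv : y = v
    · have hxD := hyv_case x (by rw [hyv] at hxy; exact hxy) hxu hxv
      left; rw [hyv, hcv, hcD x hxD]; omega
    · exact hclass x y hxy hxu hxv hyu hyv
  -- second (swapped) order extends P
  have hle2 : ∀ x y : N, (x, y) ∈ P →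
      (c (Equiv.swap u v x) < c (Equiv.swap u v y) ∨
       (c (Equiv.swap u v x) = c (Equiv.swap u v y) ∧
        g (Equiv.swap u v x) ≤ g (Equiv.swap u v y))) := by
    intro x y hxy
    by_cases hne : x = y
    · subst hne; exact Or.inr ⟨rfl, le_refl _⟩
    by_cases hxu : x = u
    · have hyu : y ≠ u := fun h => hne (hxu.trans h.symm)
      have h3 := hux_case y (by rw [hxu] at hxy; exact hxy) hyu
      rw [hxu, Equiv.swap_apply_left, Equiv.swap_apply_of_ne_of_ne hyu h3.1, hcv, h3.2]
      left; omega
    by_cases hxv : x = v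
    · have hyv : y ≠ v := fun h => hne (hxv.trans h.symm)
      have h3 := hvx_case y (by rw [hxv] at hxy; exact hxy) hyv
      rw [hxv, Equiv.swap_apply_right, Equiv.swap_apply_of_ne_of_ne h3.1 hyv, hcu, h3.2]
      left; omega
    by_cases hyu : y = u
    · have hxD := hyu_case x (by rw [hyu] at hxy; exact hxy) hxu hxv
      rw [hyu, Equiv.swap_apply_of_ne_of_ne hxu hxv, Equiv.swap_apply_left, hcv, hcD x hxD]
      left; omega
    by_cases hyv : y = v
    · have hxD := hyv_case x (by rw [hyv] at hxy; exact hxy) hxu hxv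
      rw [hyv, Equiv.swap_apply_of_ne_of_ne hxu hxv, Equiv.swap_apply_right, hcu, hcD x hxD]
      left; omega
    · rw [Equiv.swap_apply_of_ne_of_ne hxu hxv, Equiv.swap_apply_of_ne_of_ne hyu hyv]
      exact hclass x y hxy hxu hxv hyu hyv
  -- the enumerations
  set π0 : Fin (Fintype.card N) ≃o N := monoEquivOfFin N rfl with hπ0
  set π : Enum N := π0.toEquiv with hπdef
  have hπ : π ∈ LinExt P := by
    intro p hp
    show π0.symm p.1 ≤ π0.symm p.2
    exact π0.symm.monotone (hle1 p.1 p.2 hp)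
  set σ : Enum N := π.trans (Equiv.swap u v) with hσdef
  have hσapp : ∀ j, σ j = Equiv.swap u v (π j) := fun j => rfl
  have hσ : σ ∈ LinExt P := by
    intro p hp
    show π.symm ((Equiv.swap u v).symm p.1) ≤ π.symm ((Equiv.swap u v).symm p.2)
    rw [Equiv.symm_swap]
    show π0.symm (Equiv.swap u v p.1) ≤ π0.symm (Equiv.swap u v p.2)
    apply π0.symm.monotone
    rw [le_def]
    exact hle2 p.1 p.2 hp
  -- adjacency of u and v in the order
  have huvlt : u < v := by rw [lt_def, hcu, hcv]; left; omega
  have hnone : ∀ w : N, ¬ (u < w ∧ w < v) := by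
    rintro w ⟨hw1, hw2⟩
    rw [lt_def, hcu] at hw1
    rw [lt_def, hcv] at hw2
    rcases hw1 with h | ⟨h, hg'⟩
    · rcases hw2 with h' | ⟨h', hg''⟩
      · have := hcv' w (by omega)
        subst this
        omega
      · have := hcv' w h'
        subst this
        exact absurd hg'' (lt_irrefl _)
    · have := hcu' w h.symm
      subst this
      exact absurd hg' (lt_irrefl _)
  have hsymm_eq : ∀ a : N, π.symm a = π0.symm a := fun _ => rfl
  have hival : (π.symm v : ℕ) = (π.symm u : ℕ) + 1 := by
    rw [hsymm_eq, hsymm_eq]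
    have hlt : π0.symm u < π0.symm v := π0.symm.strictMono huvlt
    by_contra hne
    have hge : (π0.symm u : ℕ) + 2 ≤ (π0.symm v : ℕ) := by
      have := Fin.lt_iff_val_lt_val.1 hlt
      omega
    have hj : (π0.symm u : ℕ) + 1 < Fintype.card N :=
      lt_of_lt_of_le (by omega) (π0.symm v).2.le
    have h1' : u < π0 ⟨(π0.symm u : ℕ) + 1, hj⟩ := by
      apply π0.symm.lt_iff_lt.1
      rw [OrderIso.symm_apply_apply]
      exact Fin.lt_iff_val_lt_val.2 (show (π0.symm u : ℕ) < (π0.symm u : ℕ) + 1 by omega)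
    have h2' : π0 ⟨(π0.symm u : ℕ) + 1, hj⟩ < v := by
      apply π0.symm.lt_iff_lt.1
      rw [OrderIso.symm_apply_apply]
      exact Fin.lt_iff_val_lt_val.2 (show (π0.symm u : ℕ) + 1 < (π0.symm v : ℕ) by omega)
    exact hnone _ ⟨h1', h2'⟩
  have hlt2 : (π.symm u : ℕ) + 1 < Fintype.card N := by
    have := (π.symm v).2
    omega
  have hfin : (⟨(π.symm u : ℕ) + 1, hlt2⟩ : Fin (Fintype.card N)) = π.symm v :=
    Fin.ext hival.symm
  have hπi : π (π.symm u) = u := π.apply_symm_apply u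
  have hπi1 : π ⟨(π.symm u : ℕ) + 1, hlt2⟩ = v := by rw [hfin]; exact π.apply_symm_apply v
  refine ⟨π, hπ, σ, hσ, π.symm u, hlt2, ⟨?_, ?_, ?_⟩, ?_⟩
  · rw [hσapp, hπi1, Equiv.swap_apply_right, hπi]
  · rw [hσapp, hπi, Equiv.swap_apply_left, hπi1]
  · intro k hk1 hk2
    have hku : π k ≠ u := fun h => hk1 (by rw [← h, Equiv.symm_apply_apply])
    have hkv : π k ≠ v := fun h => hk2 (by rw [← hπi1] at h; exact π.injective h)
    rw [hσapp, Equiv.swap_apply_of_ne_of_ne hku hkv]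
  · rw [hπi, hπi1]

end StmtNineHelper

/-- For a poset `P` on `N`, `S = L(P)`, and distinct `u, v ∈ N`:
`u` and `v` are incomparable in `P` iff `{u,v} ∈ Inv(S)`. -/
theorem stmt9 {N : Type*} [Fintype N] [Nonempty N] (P : Set (N × N)) (hP : IsPosetOn P)
    (u v : N) (huv : u ≠ v) :
    ((u, v) ∉ P ∧ (v, u) ∉ P) ↔ ({u, v} : Set N) ∈ InvS (LinExt P) := by
  constructor
  · rintro ⟨h1, h2⟩
    obtain ⟨π, hπ, σ, hσ, hadj⟩ := stmt9_exists_adj P hP u v huv h1 h2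
    exact ⟨u, v, huv, rfl, π, hπ, σ, hσ, hadj⟩
  · rintro ⟨a, b, hab, hset, π, hπ, σ, hσ, i, h, ⟨e1, e2, e3⟩, hlab⟩
    have hlab' : ({π i, π ⟨(i : ℕ) + 1, h⟩} : Set N) = {u, v} := hlab.trans hset.symm
    have hne : π i ≠ π ⟨(i : ℕ) + 1, h⟩ := by
      intro hcon
      have := π.injective hcon
      have := congrArg Fin.val this
      simp at this
    have hmem1 : π i ∈ ({u, v} : Set N) := by
      rw [← hlab']; exact Set.mem_insert _ _
    have hmem2 : π ⟨(i : ℕ) + 1, h⟩ ∈ ({u, v} : Set N) := by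
      rw [← hlab']; exact Set.mem_insert_iff.2 (Or.inr rfl)
    simp only [Set.mem_insert_iff, Set.mem_singleton_iff] at hmem1 hmem2
    have hilt : i < (⟨(i : ℕ) + 1, h⟩ : Fin (Fintype.card N)) :=
      Fin.lt_iff_val_lt_val.2 (by simp)
    have hπs1 : π.symm (π i) = i := π.symm_apply_apply i
    have hπs2 : π.symm (π ⟨(i : ℕ) + 1, h⟩) = ⟨(i : ℕ) + 1, h⟩ := π.symm_apply_apply _
    have hσs1 : σ.symm (π i) = ⟨(i : ℕ) + 1, h⟩ := by rw [e1]; exact σ.symm_apply_apply _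
    have hσs2 : σ.symm (π ⟨(i : ℕ) + 1, h⟩) = i := by rw [e2]; exact σ.symm_apply_apply _
    rcases hmem1 with hiu | hiv
    · have hi1v : π ⟨(i : ℕ) + 1, h⟩ = v := by
        rcases hmem2 with h' | h'
        · exact absurd (hiu.trans h'.symm) hne
        · exact h'
      constructor
      · intro hmem
        have := hσ (u, v) hmem
        rw [← hiu, ← hi1v, hσs1, hσs2] at this
        exact absurd this (not_le.2 hilt)
      · intro hmem
        have := hπ (v, u) hmem
        rw [← hiu, ← hi1v, hπs1, hπs2] at this
        exact absurd this (not_le.2 hilt)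
    · have hi1u : π ⟨(i : ℕ) + 1, h⟩ = u := by
        rcases hmem2 with h' | h'
        · exact h'
        · exact absurd (hiv.trans h'.symm) hne
      constructor
      · intro hmem
        have := hπ (u, v) hmem
        rw [← hiv, ← hi1u, hπs1, hπs2] at this
        exact absurd this (not_le.2 hilt)
      · intro hmem
        have := hσ (v, u) hmem
        rw [← hiv, ← hi1u, hσs1, hσs2] at this
        exact absurd this (not_le.2 hilt)
end

section
/- Let P be a poset on a nonempty finite set N and S = L(P). For any two distinct elements u, v ∈ N: u is covered by v in P (i.e. (u,v) ∈ P \ Δ and there is no w ∈ N \ {u,v} with (u,w) ∈ P and (w,v) ∈ P) if and only if (u,v) ∈ Cov(S). -/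
section Stmt10Aux

variable {N : Type*} [Fintype N]

lemma stmt10_bwd (P : Set (N × N)) (hP : IsPosetOn P) (u v : N) (huv : u ≠ v)
    (h : (u, v) ∈ CovS (LinExt P)) :
    ((u, v) ∈ P \ diag N ∧
      ¬ ∃ w : N, w ≠ u ∧ w ≠ v ∧ (u, w) ∈ P ∧ (w, v) ∈ P) := by
  obtain ⟨π, hπ, σ, hσ, ⟨i, hi, ⟨ht1, ht2, ht3⟩, hlab⟩, hlt⟩ := h
  obtain ⟨hrefl, hanti, htrans⟩ := hP
  set i' : Fin (Fintype.card N) := ⟨(i : ℕ) + 1, hi⟩ with hi'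
  have hval : (i' : ℕ) = (i : ℕ) + 1 := rfl
  have hu : u ∈ ({π i, π i'} : Set N) := by rw [hlab]; exact Set.mem_insert _ _
  have hv : v ∈ ({π i, π i'} : Set N) := by rw [hlab]; exact Set.mem_insert_of_mem _ rfl
  rw [Set.mem_insert_iff, Set.mem_singleton_iff] at hu hv
  have hπiu : π i = u ∧ π i' = v := by
    rcases hu with hu | hu
    · rcases hv with hv | hv
      · exact absurd (hu.trans hv.symm) huv
      · exact ⟨hu.symm, hv.symm⟩
    · rcases hv with hv | hv
      · exfalso
        have h1 : π.symm u = i' := by rw [Equiv.symm_apply_eq]; exact hu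
        have h2 : π.symm v = i := by rw [Equiv.symm_apply_eq]; exact hv
        rw [h1, h2, Fin.lt_def] at hlt
        omega
      · exact absurd (hu.trans hv.symm) huv
  obtain ⟨hπu, hπv⟩ := hπiu
  have hpu : π.symm u = i := by rw [Equiv.symm_apply_eq]; exact hπu.symm
  have hpv : π.symm v = i' := by rw [Equiv.symm_apply_eq]; exact hπv.symm
  have hσi : σ i = v := by rw [← ht2]; exact hπv
  have hσi' : σ i' = u := by rw [← ht1]; exact hπu
  have hsu : σ.symm u = i' := by rw [Equiv.symm_apply_eq]; exact hσi'.symm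
  have hsv : σ.symm v = i := by rw [Equiv.symm_apply_eq]; exact hσi.symm
  have hst : ∀ w : N, w ≠ u → w ≠ v → σ.symm w = π.symm w := by
    intro w hwu hwv
    have hk1 : π.symm w ≠ i := by
      intro hcon
      exact hwu (by rw [← hπu, ← hcon, Equiv.apply_symm_apply])
    have hk2 : π.symm w ≠ i' := by
      intro hcon
      exact hwv (by rw [← hπv, ← hcon, Equiv.apply_symm_apply])
    rw [Equiv.symm_apply_eq, ← ht3 _ hk1 hk2, Equiv.apply_symm_apply]
  have huvP : (u, v) ∈ P := by
    rw [LinExt, Set.mem_setOf_eq] at hσ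
    push_neg at hσ
    obtain ⟨⟨a, b⟩, hab, hba⟩ := hσ
    dsimp only at hab hba
    have hπab : π.symm a ≤ π.symm b := hπ (a, b) hab
    rw [Fin.le_def] at hπab
    rw [Fin.lt_def] at hba
    have key : a = u ∧ b = v := by
      by_cases hau : a = u
      · refine ⟨hau, ?_⟩
        by_contra hbv
        by_cases hbu : b = u
        · rw [hau, hbu] at hba; omega
        · have hbπ : σ.symm b = π.symm b := hst b hbu hbv
          rw [hau, hsu] at hba
          rw [hbπ] at hba
          rw [hau, hpu] at hπab
          have hbne : π.symm b ≠ i := fun hcon =>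
            hbu (by rw [← hπu, ← hcon, Equiv.apply_symm_apply])
          have hnn : (π.symm b : ℕ) ≠ (i : ℕ) := fun hcc => hbne (Fin.ext hcc)
          omega
      · exfalso
        by_cases hav : a = v
        · rw [hav, hsv] at hba
          by_cases hbu : b = u
          · rw [hbu, hsu] at hba; omega
          · by_cases hbv : b = v
            · rw [hbv, hsv] at hba; omega
            · rw [hst b hbu hbv] at hba
              rw [hav, hpv] at hπab
              omega
        · rw [hst a hau hav] at hba
          by_cases hbu : b = u
          · rw [hbu, hsu] at hba
            rw [hbu, hpu] at hπab
            omega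
          · by_cases hbv : b = v
            · rw [hbv, hsv] at hba
              rw [hbv, hpv] at hπab
              have hane : π.symm a ≠ i' := fun hcon =>
                hav (by rw [← hπv, ← hcon, Equiv.apply_symm_apply])
              have hnn : (π.symm a : ℕ) ≠ (i' : ℕ) := fun hcc => hane (Fin.ext hcc)
              omega
            · rw [hst b hbu hbv] at hba
              omega
    rw [key.1, key.2] at hab
    exact hab
  refine ⟨⟨huvP, fun hcon => huv hcon⟩, ?_⟩
  rintro ⟨w, hwu, hwv, h1w, h2w⟩
  have e1 : π.symm u ≤ π.symm w := hπ (u, w) h1w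
  have e2 : π.symm w ≤ π.symm v := hπ (w, v) h2w
  have hk1 : π.symm w ≠ i := by
    intro hcon
    exact hwu (by rw [← hπu, ← hcon, Equiv.apply_symm_apply])
  have hk2 : π.symm w ≠ i' := by
    intro hcon
    exact hwv (by rw [← hπv, ← hcon, Equiv.apply_symm_apply])
  rw [hpu] at e1
  rw [hpv] at e2
  rw [Fin.le_def] at e1 e2
  have n1 : (π.symm w : ℕ) ≠ (i : ℕ) := fun hcc => hk1 (Fin.ext hcc)
  have n2 : (π.symm w : ℕ) ≠ (i' : ℕ) := fun hcc => hk2 (Fin.ext hcc)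
  omega

lemma stmt10_fwd (P : Set (N × N)) (hP : IsPosetOn P) (u v : N) (huv : u ≠ v)
    (hmem : (u, v) ∈ P)
    (hcov : ¬ ∃ w : N, w ≠ u ∧ w ≠ v ∧ (u, w) ∈ P ∧ (w, v) ∈ P) :
    (u, v) ∈ CovS (LinExt P) := by
  classical
  obtain ⟨hrefl, hanti, htrans⟩ := hP
  set A : Set N := {w | (w, u) ∈ P ∨ ((w, v) ∈ P ∧ w ≠ v)} with hA
  have huA : u ∈ A := Or.inl (hrefl u)
  have hvA : v ∉ A := by
    rintro (h | ⟨h, hne⟩)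
    · exact huv (hanti u v hmem h)
    · exact hne rfl
  have hdown : ∀ a b : N, (a, b) ∈ P → b ∈ A → a ∈ A := by
    rintro a b hab (h | ⟨h, hne⟩)
    · exact Or.inl (htrans _ _ _ hab h)
    · by_cases hav : a = v
      · exact absurd (hanti b v h (hav ▸ hab)) hne
      · exact Or.inr ⟨htrans _ _ _ hab h, hav⟩
  have humax : ∀ w ∈ A, (u, w) ∈ P → w = u := by
    rintro w (h | ⟨h, hne⟩) huw
    · exact hanti _ _ h huw
    · by_cases hwu : w = u
      · exact hwu
      · exact absurd ⟨w, hwu, hne, huw, h⟩ hcov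
  set q : N → N → Prop := fun a b =>
    (a ∈ A → b ∈ A → ((a, b) ∈ P ∨ b = u)) ∧ (a ∉ A → b ∉ A ∧ ((a, b) ∈ P ∨ a = v))
    with hq
  have hPq : ∀ a b : N, (a, b) ∈ P → q a b := fun a b hab =>
    ⟨fun _ _ => Or.inl hab, fun ha => ⟨fun hb => ha (hdown a b hab hb), Or.inl hab⟩⟩
  haveI hpo : IsPartialOrder N q :=
    { refl := fun a => ⟨fun _ _ => Or.inl (hrefl a), fun ha => ⟨ha, Or.inl (hrefl a)⟩⟩
      trans := by
        rintro a b c ⟨h1, h2⟩ ⟨h1', h2'⟩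
        constructor
        · intro ha hc
          by_cases hb : b ∈ A
          · rcases h1' hb hc with hbc | hcu
            · rcases h1 ha hb with hab | hbu
              · exact Or.inl (htrans _ _ _ hab hbc)
              · exact Or.inr (humax c hc (hbu ▸ hbc))
            · exact Or.inr hcu
          · exact absurd hc (h2' hb).1
        · intro ha
          obtain ⟨hbB, hab⟩ := h2 ha
          obtain ⟨hcB, hbc⟩ := h2' hbB
          refine ⟨hcB, ?_⟩
          rcases hab with hab | hav
          · rcases hbc with hbc | hbv
            · exact Or.inl (htrans _ _ _ hab hbc)
            · by_cases hav : a = v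
              · exact Or.inr hav
              · exact absurd (Or.inr ⟨hbv ▸ hab, hav⟩) ha
          · exact Or.inr hav
      antisymm := by
        rintro a b ⟨h1, h2⟩ ⟨h1', h2'⟩
        by_cases ha : a ∈ A
        · by_cases hb : b ∈ A
          · rcases h1 ha hb with hab | hbu
            · rcases h1' hb ha with hba | hau
              · exact hanti _ _ hab hba
              · exact hau.trans (humax b hb (hau ▸ hab)).symm
            · rcases h1' hb ha with hba | hau
              · exact (humax a ha (hbu ▸ hba)).trans hbu.symm
              · exact hau.trans hbu.symm
          · exact absurd ha (h2' hb).1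
        · obtain ⟨hbB, hab⟩ := h2 ha
          obtain ⟨_, hba⟩ := h2' hbB
          rcases hab with hab | hav
          · rcases hba with hba | hbv
            · exact hanti _ _ hab hba
            · by_cases hav : a = v
              · exact hav.trans hbv.symm
              · exact absurd (Or.inr ⟨hbv ▸ hab, hav⟩) ha
          · rcases hba with hba | hbv
            · by_cases hbv : b = v
              · exact hav.trans hbv.symm
              · exact absurd (Or.inr ⟨hav ▸ hba, hbv⟩) hbB
            · exact hav.trans hbv.symm }
  obtain ⟨s, hlin, hqs⟩ := extend_partialOrder q
  haveI := hlin
  letI : LinearOrder N :=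
    { le := s
      le_refl := hlin.1.1.1.1
      le_trans := hlin.1.1.2.1
      le_antisymm := hlin.1.2.1
      le_total := hlin.2.1
      toDecidableLE := Classical.decRel _ }
  set e := monoEquivOfFin N rfl with he
  set π : Enum N := e.toEquiv with hπdef
  have hπle : ∀ a b : N, s a b → π.symm a ≤ π.symm b := fun a b hab => e.symm.monotone hab
  have hπmem : π ∈ LinExt P := fun p hp => hπle _ _ (hqs _ _ (hPq _ _ hp))
  have hsuv : s u v := hqs _ _ ⟨fun _ hv2 => absurd hv2 hvA, fun ha => absurd huA ha⟩
  have hlt : π.symm u < π.symm v := by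
    have h1 : π.symm u ≤ π.symm v := hπle _ _ hsuv
    have h2 : π.symm u ≠ π.symm v := fun hcc => huv (π.symm.injective hcc)
    exact lt_of_le_of_ne h1 h2
  have hbetween : ∀ w : N, w ≠ u → w ≠ v → s u w → s w v → False := by
    intro w hwu hwv huw hwv'
    by_cases hwA : w ∈ A
    · have hwle : s w u := hqs _ _ ⟨fun _ _ => Or.inr rfl, fun hcc => absurd hwA hcc⟩
      exact hwu (hlin.1.2.1 w u hwle huw)
    · have hvle : s v w := hqs _ _ ⟨fun hv2 _ => absurd hv2 hvA, fun _ => ⟨hwA, Or.inr rfl⟩⟩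
      exact hwv (hlin.1.2.1 w v hwv' hvle)
  have hconsec : (π.symm u : ℕ) + 1 = (π.symm v : ℕ) := by
    by_contra hc
    have hlt' : (π.symm u : ℕ) < (π.symm v : ℕ) := hlt
    have hkcard : (π.symm u : ℕ) + 1 < Fintype.card N := by
      have := (π.symm v).isLt; omega
    set k : Fin (Fintype.card N) := ⟨(π.symm u : ℕ) + 1, hkcard⟩ with hk
    have hw1 : π.symm u < k := by rw [Fin.lt_def]; simp [hk]
    have hw2 : k < π.symm v := by rw [Fin.lt_def]; simp [hk]; omega
    have hq1 : u < π k := by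
      have hmono := e.strictMono hw1
      rwa [show e (π.symm u) = u from π.apply_symm_apply u] at hmono
    have hq2 : π k < v := by
      have hmono := e.strictMono hw2
      rwa [show e (π.symm v) = v from π.apply_symm_apply v] at hmono
    exact hbetween (π k) (ne_of_gt hq1) (ne_of_lt hq2) (le_of_lt hq1) (le_of_lt hq2)
  have hcard : ((π.symm u : ℕ) + 1) < Fintype.card N := by
    rw [hconsec]; exact (π.symm v).isLt
  have hvi : π.symm v = ⟨(π.symm u : ℕ) + 1, hcard⟩ := Fin.ext hconsec.symm
  set σ : Enum N := π.trans (Equiv.swap u v) with hσdef2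
  have hσdef : ∀ x, σ x = Equiv.swap u v (π x) := fun x => rfl
  have hσsymm : ∀ y, σ.symm y = π.symm (Equiv.swap u v y) := fun y => by
    simp [hσdef2, Equiv.symm_trans_apply]
  have h1 : π (π.symm u) = u := π.apply_symm_apply u
  have h2 : π ⟨(π.symm u : ℕ) + 1, hcard⟩ = v := by rw [← hvi]; exact π.apply_symm_apply v
  refine ⟨π, hπmem, σ, ?_, ⟨π.symm u, hcard, ⟨?_, ?_, ?_⟩, ?_⟩, hlt⟩
  · intro hσmem
    have hcc := hσmem (u, v) hmem
    rw [hσsymm, hσsymm] at hcc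
    simp only [Equiv.swap_apply_left, Equiv.swap_apply_right] at hcc
    exact absurd hlt (not_lt.2 hcc)
  · rw [h1, hσdef, h2, Equiv.swap_apply_right]
  · rw [h2, hσdef, h1, Equiv.swap_apply_left]
  · intro k hk hk'
    have hku : π k ≠ u := fun hcc => hk (π.injective (hcc.trans h1.symm))
    have hkv : π k ≠ v := fun hcc => hk' (π.injective (hcc.trans h2.symm))
    rw [hσdef, Equiv.swap_apply_of_ne_of_ne hku hkv]
  · show ({π (π.symm u), π ⟨(π.symm u : ℕ) + 1, hcard⟩} : Set N) = {u, v}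
    rw [h1, h2]

end Stmt10Aux

/-- For a poset `P` on `N`, `S = L(P)`, and distinct `u, v ∈ N`:
`u` is covered by `v` in `P` (i.e. `(u,v) ∈ P \ Δ` and no `w ∉ {u,v}` has
`(u,w) ∈ P` and `(w,v) ∈ P`) iff `(u,v) ∈ Cov(S)`. -/
theorem stmt10 {N : Type*} [Fintype N] [Nonempty N] (P : Set (N × N)) (hP : IsPosetOn P)
    (u v : N) (huv : u ≠ v) :
    ((u, v) ∈ P \ diag N ∧
      ¬ ∃ w : N, w ≠ u ∧ w ≠ v ∧ (u, w) ∈ P ∧ (w, v) ∈ P) ↔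
    (u, v) ∈ CovS (LinExt P) := by
  constructor
  · rintro ⟨⟨hmem, -⟩, hcov⟩
    exact stmt10_fwd P hP u v huv hmem hcov
  · exact stmt10_bwd P hP u v huv
end

section
/- Let P be a poset on a nonempty finite set N and S = L(P). Then for all (u,v) ∈ N×N: (u,v) ∈ P \ Δ if and only if (u,v) ∈ tr(Cov(S)), the transitive closure of Cov(S); consequently P = tr(Δ ∪ Cov(S)). -/
section Helpers

variable {N : Type*} [Fintype N]

/-- Build an enumeration realizing a given linear (total, antisymmetric, transitive) relation. -/
lemma exists_enum_realizing (le : N → N → Prop)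
    (htot : ∀ a b, le a b ∨ le b a) (hanti : ∀ a b, le a b → le b a → a = b)
    (htrans : ∀ a b c, le a b → le b c → le a c) :
    ∃ π : Enum N, ∀ u v : N, le u v ↔ π.symm u ≤ π.symm v := by
  classical
  haveI : IsTotal N le := ⟨htot⟩
  haveI : IsTrans N le := ⟨htrans⟩
  obtain ⟨l, hsort, hnd, hmem, hlen⟩ :
      ∃ l : List N, l.Pairwise le ∧ l.Nodup ∧ (∀ x : N, x ∈ l) ∧ Fintype.card N = l.length := by
    have hperm : List.Perm (List.insertionSort le Finset.univ.toList) Finset.univ.toList :=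
      List.perm_insertionSort le _
    exact ⟨List.insertionSort le Finset.univ.toList, List.pairwise_insertionSort le _,
      hperm.nodup_iff.mpr (Finset.nodup_toList _), fun x => hperm.mem_iff.mpr (by simp),
      by rw [hperm.length_eq, Finset.length_toList, Finset.card_univ]⟩
  set e : Fin l.length ≃ N := hnd.getEquivOfForallMemList _ hmem with he
  have main : ∀ u v : N, le u v ↔ e.symm u ≤ e.symm v := by
    intro u v
    have hu : l.get (e.symm u) = u := e.apply_symm_apply u
    have hv : l.get (e.symm v) = v := e.apply_symm_apply v
    constructor
    · intro h
      by_contra hc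
      push_neg at hc
      have := hsort.rel_get_of_lt hc
      rw [hu, hv] at this
      have heq : u = v := hanti _ _ h this
      rw [heq] at hc; exact lt_irrefl _ hc
    · intro h
      rcases eq_or_lt_of_le h with h1 | h1
      · have : u = v := by
          have := congrArg e h1
          rwa [e.apply_symm_apply, e.apply_symm_apply] at this
        rw [this]; exact (htot v v).elim id id
      · have := hsort.rel_get_of_lt h1
        rwa [hu, hv] at this
  refine ⟨(finCongr hlen).trans e, fun u v => ?_⟩
  have hval : ∀ x : N, ((((finCongr hlen).trans e).symm x : Fin (Fintype.card N)) : ℕ)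
      = ((e.symm x : Fin l.length) : ℕ) := fun x => rfl
  rw [main u v, Fin.le_def, Fin.le_def, hval, hval]

/-- Szpilrajn: a poset relation extends to a linear relation. -/
lemma exists_linext (P : Set (N × N)) (hP : IsPosetOn P) :
    ∃ le : N → N → Prop, (∀ a b : N, (a, b) ∈ P → le a b) ∧ (∀ a b, le a b ∨ le b a) ∧
      (∀ a b, le a b → le b a → a = b) ∧ (∀ a b c, le a b → le b c → le a c) := by
  obtain ⟨hrefl, hanti, htrans⟩ := hP
  haveI : IsPartialOrder N (fun a b => (a, b) ∈ P) :=
    { refl := hrefl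
      trans := fun a b c => htrans a b c
      antisymm := fun a b => hanti a b }
  obtain ⟨s, hs, hsub⟩ := extend_partialOrder (fun a b : N => (a, b) ∈ P)
  haveI := hs
  exact ⟨s, fun a b h => hsub _ _ h, fun a b => total_of s a b,
    fun a b h1 h2 => _root_.antisymm h1 h2, fun a b c h1 h2 => _root_.trans h1 h2⟩

/-- If `u, v` are adjacent in some linear extension and `(u,v) ∈ P`, then `(u,v) ∈ Cov(L(P))`. -/
lemma adj_mem_cov (P : Set (N × N)) {u v : N} (huv : (u, v) ∈ P) (π : Enum N)
    (hπ : π ∈ LinExt P) (h1 : ((π.symm u : Fin (Fintype.card N)) : ℕ) + 1 < Fintype.card N)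
    (hadj : π.symm v = ⟨((π.symm u : Fin (Fintype.card N)) : ℕ) + 1, h1⟩) :
    (u, v) ∈ CovS (LinExt P) := by
  set i : Fin (Fintype.card N) := π.symm u with hi
  set j : Fin (Fintype.card N) := ⟨(i : ℕ) + 1, h1⟩ with hj
  have hij : i ≠ j := by
    intro h; have := congrArg Fin.val h; simp [hj] at this
  set σ : Enum N := (Equiv.swap i j).trans π with hσ
  have hσsymm : ∀ x : N, σ.symm x = Equiv.swap i j (π.symm x) := by
    intro x; simp [hσ, Equiv.symm_trans_apply]
  refine ⟨π, hπ, σ, ?_, ⟨i, h1, ⟨?_, ?_, ?_⟩, ?_⟩, ?_⟩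
  · intro hσmem
    have hle := hσmem (u, v) huv
    have h2 : σ.symm u = j := by
      rw [hσsymm, ← hi, Equiv.swap_apply_left]
    have h3 : σ.symm v = i := by
      rw [hσsymm, hadj]; exact Equiv.swap_apply_right i j
    rw [h2, h3] at hle
    have := Fin.le_def.mp hle
    simp [hj] at this
  · show π i = σ j
    rw [hσ]; simp [Equiv.swap_apply_right]
  · show π j = σ i
    rw [hσ]; simp [Equiv.swap_apply_left]
  · intro k hk1 hk2
    rw [hσ]; simp [Equiv.swap_apply_of_ne_of_ne hk1 hk2]
    exact (Equiv.swap_apply_of_ne_of_ne hk1 hk2).symm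
  · have hu : π i = u := by rw [hi]; exact π.apply_symm_apply u
    have hv : π j = v := by rw [← hadj]; exact π.apply_symm_apply v
    rw [hu, hv]
  · show π.symm u < π.symm v
    rw [← hi, hadj, Fin.lt_def]
    simp [hj]

/-- Every cover of `P` is in `Cov(L(P))`. -/
lemma cover_mem_cov (P : Set (N × N)) (hP : IsPosetOn P) {a b : N}
    (hab : (a, b) ∈ P) (hne : a ≠ b)
    (hcov : ∀ z, (a, z) ∈ P → (z, b) ∈ P → z = a ∨ z = b) :
    (a, b) ∈ CovS (LinExt P) := by
  classical
  obtain ⟨hrefl, hanti, htrans⟩ := hP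
  obtain ⟨le₀, hext, htot₀, hanti₀, htrans₀⟩ :=
    exists_linext P ⟨hrefl, hanti, htrans⟩
  set D : N → Prop := fun z => (z, a) ∈ P ∨ ((z, b) ∈ P ∧ z ≠ b) with hD
  set bi : N → ℕ := fun x => if x = a then 1 else if x = b then 2 else if D x then 0 else 3
    with hbi
  have bia : bi a = 1 := by simp [hbi]
  have bib : bi b = 2 := by simp [hbi, hne.symm]
  have bi1 : ∀ x, bi x = 1 → x = a := by
    intro x hx; by_contra h
    simp only [hbi, if_neg h] at hx
    split_ifs at hx <;> omega
  have bi2 : ∀ x, bi x = 2 → x = b := by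
    intro x hx; by_contra h
    simp only [hbi] at hx
    split_ifs at hx <;> omega
  have bile : ∀ x, bi x ≤ 3 := by
    intro x; simp only [hbi]; split_ifs <;> omega
  have hmono : ∀ x y : N, (x, y) ∈ P → bi x ≤ bi y := by
    intro x y hxy
    by_cases hya : y = a
    · rw [hya, bia]
      have hxy' : (x, a) ∈ P := by rw [← hya]; exact hxy
      by_cases hxaa : x = a
      · rw [hxaa, bia]
      · have hxb : x ≠ b := fun h => hne (hanti a b hab (by rw [← h]; exact hxy'))
        have hDx : D x := Or.inl hxy'
        have : bi x = 0 := by simp [hbi, hxaa, hxb, hDx]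
        omega
    by_cases hyb : y = b
    · rw [hyb, bib]
      have hxy' : (x, b) ∈ P := by rw [← hyb]; exact hxy
      by_cases hxa : x = a
      · rw [hxa, bia]; omega
      by_cases hxb : x = b
      · rw [hxb, bib]
      · have hDx : D x := Or.inr ⟨hxy', hxb⟩
        have : bi x = 0 := by simp [hbi, hxa, hxb, hDx]
        omega
    by_cases hDy : D y
    · have hbiy : bi y = 0 := by simp [hbi, hya, hyb, hDy]
      have hxa : x ≠ a := by
        intro h
        rw [h] at hxy
        rcases hDy with h1 | ⟨h1, h2⟩
        · exact hya (hanti a y hxy h1).symm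
        · rcases hcov y hxy h1 with hh | hh
          · exact hya hh
          · exact hyb hh
      have hxb : x ≠ b := by
        intro h
        rw [h] at hxy
        rcases hDy with h1 | ⟨h1, h2⟩
        · exact hne (hanti a b hab (htrans b y a hxy h1))
        · exact hyb (hanti y b h1 hxy)
      have hDx : D x := by
        rcases hDy with h1 | ⟨h1, h2⟩
        · exact Or.inl (htrans x y a hxy h1)
        · exact Or.inr ⟨htrans x y b hxy h1, hxb⟩
      have : bi x = 0 := by simp [hbi, hxa, hxb, hDx]
      omega
    · have : bi y = 3 := by simp [hbi, hya, hyb, hDy]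
      rw [this]; exact bile x
  set le' : N → N → Prop := fun x y => bi x < bi y ∨ (bi x = bi y ∧ le₀ x y) with hle'
  have htot' : ∀ x y, le' x y ∨ le' y x := by
    intro x y
    rcases Nat.lt_trichotomy (bi x) (bi y) with h | h | h
    · exact Or.inl (Or.inl h)
    · rcases htot₀ x y with h0 | h0
      · exact Or.inl (Or.inr ⟨h, h0⟩)
      · exact Or.inr (Or.inr ⟨h.symm, h0⟩)
    · exact Or.inr (Or.inl h)
  have hanti' : ∀ x y, le' x y → le' y x → x = y := by
    rintro x y (h1 | ⟨h1, h1'⟩) (h2 | ⟨h2, h2'⟩) <;> try omega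
    exact hanti₀ x y h1' h2'
  have htrans' : ∀ x y z, le' x y → le' y z → le' x z := by
    rintro x y z (h1 | ⟨h1, h1'⟩) (h2 | ⟨h2, h2'⟩)
    · exact Or.inl (lt_trans h1 h2)
    · exact Or.inl (h2 ▸ h1)
    · exact Or.inl (h1 ▸ h2)
    · exact Or.inr ⟨h1.trans h2, htrans₀ x y z h1' h2'⟩
  have hext' : ∀ x y : N, (x, y) ∈ P → le' x y := by
    intro x y h
    rcases lt_or_eq_of_le (hmono x y h) with h1 | h1
    · exact Or.inl h1
    · exact Or.inr ⟨h1, hext x y h⟩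
  obtain ⟨π, hπ⟩ := exists_enum_realizing le' htot' hanti' htrans'
  have hπS : π ∈ LinExt P := fun p hp => (hπ p.1 p.2).1 (hext' _ _ hp)
  have hab' : π.symm a < π.symm b := by
    have h1 : π.symm a ≤ π.symm b := (hπ a b).1 (Or.inl (by rw [bia, bib]; omega))
    rcases lt_or_eq_of_le h1 with h | h
    · exact h
    · exact absurd (π.symm.injective h) hne
  have h1 : ((π.symm a : Fin (Fintype.card N)) : ℕ) + 1 < Fintype.card N := by
    have := Fin.lt_def.mp hab'
    have := (π.symm b).isLt
    omega
  set j : Fin (Fintype.card N) := ⟨((π.symm a : Fin (Fintype.card N)) : ℕ) + 1, h1⟩ with hj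
  set c : N := π j with hc
  have hcj : π.symm c = j := π.symm_apply_apply j
  have h2 : le' a c := (hπ a c).2 (by rw [hcj]; exact Fin.le_def.mpr (by simp [hj]))
  have h3 : le' c b := (hπ c b).2 (by
    rw [hcj]; exact Fin.le_def.mpr (by
      have := Fin.lt_def.mp hab'
      simp [hj]; omega))
  have hca : c ≠ a := by
    intro h; rw [h] at hcj
    have := congrArg Fin.val hcj
    simp [hj] at this
  have hbic1 : 1 ≤ bi c := by
    rcases h2 with h | ⟨h, _⟩ <;> omega
  have hbic2 : bi c ≤ 2 := by
    rcases h3 with h | ⟨h, _⟩ <;> rw [bib] at h <;> omega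
  have hcb : c = b := by
    rcases Nat.lt_or_ge (bi c) 2 with h | h
    · exact absurd (bi1 c (by omega)) hca
    · exact bi2 c (by omega)
  have hadj : π.symm b = j := by rw [← hcb]; exact hcj
  exact adj_mem_cov P hab π hπS h1 hadj

/-- `Cov(L(P)) ⊆ P \ Δ`. -/
lemma cov_subset (P : Set (N × N)) (hP : IsPosetOn P) :
    ∀ u v : N, (u, v) ∈ CovS (LinExt P) → (u, v) ∈ P ∧ u ≠ v := by
  rintro u v ⟨π, hπ, σ, hσ, ⟨i, h, ⟨e1, e2, e3⟩, hlab⟩, hlt⟩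
  set j : Fin (Fintype.card N) := ⟨(i : ℕ) + 1, h⟩ with hj
  have hij : i ≠ j := by
    intro hh; have := congrArg Fin.val hh; simp [hj] at this
  have hσeq : σ = (Equiv.swap i j).trans π := by
    apply Equiv.ext; intro k
    by_cases hk1 : k = i
    · subst hk1; simp [Equiv.swap_apply_left]; exact e2.symm
    by_cases hk2 : k = j
    · subst hk2; simp [Equiv.swap_apply_right]; exact e1.symm
    · simp [Equiv.swap_apply_of_ne_of_ne hk1 hk2]; exact (e3 k hk1 hk2).symm
  have hσsymm : ∀ x : N, σ.symm x = Equiv.swap i j (π.symm x) := by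
    intro x; rw [hσeq]; simp [Equiv.symm_trans_apply]
  have hne_uv : u ≠ v := fun hh => by rw [hh] at hlt; exact lt_irrefl _ hlt
  have hu_mem : u ∈ ({π i, π j} : Set N) := by rw [hlab]; exact Or.inl rfl
  have hv_mem : v ∈ ({π i, π j} : Set N) := by rw [hlab]; exact Or.inr rfl
  have hpi : π i = u ∧ π j = v := by
    simp only [Set.mem_insert_iff, Set.mem_singleton_iff] at hu_mem hv_mem
    rcases hu_mem with hu | hu <;> rcases hv_mem with hv | hv
    · exact absurd (hu.trans hv.symm) hne_uv
    · exact ⟨hu.symm, hv.symm⟩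
    · exfalso
      have h1 : π.symm u = j := by rw [hu]; exact π.symm_apply_apply j
      have h2 : π.symm v = i := by rw [hv]; exact π.symm_apply_apply i
      have hlt' : π.symm u < π.symm v := hlt
      rw [h1, h2, Fin.lt_def] at hlt'
      simp [hj] at hlt'
    · exact absurd (hu.trans hv.symm) hne_uv
  obtain ⟨hpiu, hpjv⟩ := hpi
  simp only [LinExt, Set.mem_setOf_eq, not_forall] at hσ
  obtain ⟨p, hpP, hple⟩ := hσ
  obtain ⟨aa, bb⟩ := p
  have hπab : π.symm aa ≤ π.symm bb := hπ (aa, bb) hpP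
  have hσab : σ.symm bb < σ.symm aa := lt_of_not_ge hple
  rw [hσsymm, hσsymm] at hσab
  set x : Fin (Fintype.card N) := π.symm aa with hx
  set y : Fin (Fintype.card N) := π.symm bb with hy
  have hji : (j : ℕ) = (i : ℕ) + 1 := rfl
  have hkey : x = i ∧ y = j := by
    have hxy : x ≠ y := by
      intro hh; rw [hh] at hσab; exact lt_irrefl _ hσab
    have hxylt : (x : ℕ) < (y : ℕ) := by
      have h0 : (x : ℕ) ≤ (y : ℕ) := Fin.le_def.mp hπab
      rcases lt_or_eq_of_le h0 with hh | hh
      · exact hh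
      · exact absurd (Fin.ext hh) hxy
    by_cases hxi : x = i
    · by_cases hyj : y = j
      · exact ⟨hxi, hyj⟩
      · exfalso
        have hyi : y ≠ i := fun hh => hxy (hxi.trans hh.symm)
        rw [hxi, Equiv.swap_apply_left, Equiv.swap_apply_of_ne_of_ne hyi hyj] at hσab
        have hv1 := Fin.lt_def.mp hσab
        have hv2 : (i : ℕ) < (y : ℕ) := by rw [← hxi]; exact hxylt
        omega
    · by_cases hxj : x = j
      · exfalso
        have hv2 : (j : ℕ) < (y : ℕ) := by rw [← hxj]; exact hxylt
        have hyi : y ≠ i := by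
          intro hh; rw [hh] at hv2; omega
        have hyj : y ≠ j := fun hh => hxy (hxj.trans hh.symm)
        rw [hxj, Equiv.swap_apply_right, Equiv.swap_apply_of_ne_of_ne hyi hyj] at hσab
        have hv1 := Fin.lt_def.mp hσab
        omega
      · exfalso
        rw [Equiv.swap_apply_of_ne_of_ne hxi hxj] at hσab
        by_cases hyi : y = i
        · rw [hyi, Equiv.swap_apply_left] at hσab
          have hv1 := Fin.lt_def.mp hσab
          have hv2 : (y : ℕ) = (i : ℕ) := congrArg Fin.val hyi
          omega
        by_cases hyj : y = j
        · rw [hyj, Equiv.swap_apply_right] at hσab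
          have hv1 := Fin.lt_def.mp hσab
          have hv2 : (y : ℕ) = (j : ℕ) := congrArg Fin.val hyj
          have hv3 : (x : ℕ) ≠ (i : ℕ) := fun hh => hxi (Fin.ext hh)
          omega
        · rw [Equiv.swap_apply_of_ne_of_ne hyi hyj] at hσab
          have hv1 := Fin.lt_def.mp hσab
          omega
  obtain ⟨hxi, hyj⟩ := hkey
  have haau : aa = u := by
    rw [← hpiu, ← hxi, hx]; exact (π.apply_symm_apply aa).symm
  have hbbv : bb = v := by
    rw [← hpjv, ← hyj, hy]; exact (π.apply_symm_apply bb).symm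
  rw [haau, hbbv] at hpP
  exact ⟨hpP, hne_uv⟩

/-- Strict pairs of `P` are in the transitive closure of `Cov(L(P))`. -/
lemma mem_trans_cov (P : Set (N × N)) (hP : IsPosetOn P) :
    ∀ u v : N, (u, v) ∈ P → u ≠ v →
      Relation.TransGen (fun a b : N => (a, b) ∈ CovS (LinExt P)) u v := by
  classical
  obtain ⟨hrefl, hanti, htrans⟩ := id hP
  set itv : N → N → Finset N :=
    fun u v => Finset.univ.filter (fun w => (u, w) ∈ P ∧ (w, v) ∈ P) with hitv
  suffices H : ∀ n (u v : N), (itv u v).card ≤ n → (u, v) ∈ P → u ≠ v →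
      Relation.TransGen (fun a b : N => (a, b) ∈ CovS (LinExt P)) u v by
    intro u v hp hne; exact H (itv u v).card u v le_rfl hp hne
  intro n
  induction n with
  | zero =>
    intro u v hc hp hne
    exfalso
    have : u ∈ itv u v := by simp [hitv, hrefl u, hp]
    have := Finset.card_pos.mpr ⟨u, this⟩
    omega
  | succ n ih =>
    intro u v hc hp hne
    by_cases hcov : ∀ z, (u, z) ∈ P → (z, v) ∈ P → z = u ∨ z = v
    · exact Relation.TransGen.single (cover_mem_cov P hP hp hne hcov)
    · push_neg at hcov
      obtain ⟨w, hw1, hw2, hw3⟩ := hcov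
      have hwu : w ≠ u := hw3.1
      have hwv : w ≠ v := hw3.2
      have hsub1 : itv u w ⊂ itv u v := by
        constructor
        · intro x hx
          simp only [hitv, Finset.mem_filter, Finset.mem_univ, true_and] at hx ⊢
          exact ⟨hx.1, htrans x w v hx.2 hw2⟩
        · intro hsub
          have hv : v ∈ itv u v := by simp [hitv, hp, hrefl v]
          have := hsub hv
          simp only [hitv, Finset.mem_filter, Finset.mem_univ, true_and] at this
          exact hwv (hanti w v hw2 this.2)
      have hsub2 : itv w v ⊂ itv u v := by
        constructor
        · intro x hx
          simp only [hitv, Finset.mem_filter, Finset.mem_univ, true_and] at hx ⊢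
          exact ⟨htrans u w x hw1 hx.1, hx.2⟩
        · intro hsub
          have hu : u ∈ itv u v := by simp [hitv, hrefl u, hp]
          have := hsub hu
          simp only [hitv, Finset.mem_filter, Finset.mem_univ, true_and] at this
          exact hwu (hanti w u this.1 hw1)
      have h1 : (itv u w).card ≤ n :=
        Nat.lt_succ_iff.mp (lt_of_lt_of_le (Finset.card_lt_card hsub1) hc)
      have h2 : (itv w v).card ≤ n :=
        Nat.lt_succ_iff.mp (lt_of_lt_of_le (Finset.card_lt_card hsub2) hc)
      exact (ih u w h1 hw1 hwu.symm).trans (ih w v h2 hw2 hwv)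

end Helpers

/-- For a poset `P` on `N` and `S = L(P)`: for all `(u,v)`,
`(u,v) ∈ P \ Δ` iff `(u,v) ∈ tr(Cov(S))`; consequently `P = tr(Δ ∪ Cov(S))`. -/
theorem stmt11 {N : Type*} [Fintype N] [Nonempty N] (P : Set (N × N)) (hP : IsPosetOn P) :
    (∀ u v : N, (u, v) ∈ P \ diag N ↔ (u, v) ∈ trCl (CovS (LinExt P))) ∧
    P = trCl (diag N ∪ CovS (LinExt P)) := by
  obtain ⟨hrefl, hanti, htrans⟩ := id hP
  have hcov := cov_subset P hP
  have bwd : ∀ u v : N, Relation.TransGen (fun a b : N => (a, b) ∈ CovS (LinExt P)) u v →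
      (u, v) ∈ P ∧ u ≠ v := by
    intro u v h
    induction h with
    | single h => exact hcov _ _ h
    | tail h1 h2 ih =>
      obtain ⟨hbc, hnebc⟩ := hcov _ _ h2
      refine ⟨htrans _ _ _ ih.1 hbc, ?_⟩
      rintro rfl
      exact hnebc (hanti _ _ hbc ih.1)
  constructor
  · intro u v
    constructor
    · rintro ⟨hp, hd⟩
      have hne : u ≠ v := fun h => hd h
      exact mem_trans_cov P hP u v hp hne
    · intro h
      obtain ⟨h1, h2⟩ := bwd u v h
      exact ⟨h1, h2⟩
  · ext ⟨u, v⟩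
    constructor
    · intro hp
      by_cases h : u = v
      · exact Relation.TransGen.single (Or.inl h)
      · exact Relation.TransGen.mono (fun a b hab => Or.inr hab) u v
          (mem_trans_cov P hP u v hp h)
    · intro h
      have key : ∀ a b : N,
          Relation.TransGen (fun a b : N => (a, b) ∈ diag N ∪ CovS (LinExt P)) a b →
          (a, b) ∈ P := by
        intro a b hab
        induction hab with
        | single h =>
          rcases h with h | h
          · simp only [diag, Set.mem_setOf_eq] at h
            rw [← h]; exact hrefl _
          · exact (hcov _ _ h).1
        | tail h1 h2 ih =>
          rcases h2 with h | h
          · simp only [diag, Set.mem_setOf_eq] at h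
            rw [← h]; exact ih
          · exact htrans _ _ _ ih (hcov _ _ h).1
      exact key u v h
end
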